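/- arXiv:2307.16272 — 3 statements merged into one kernel-verified Lean document; each statement's English description precedes it below -/
import Mathlib

section
/- Let r ≥ 1 and d ≥ 4 be integers. Then every rank r−1 incidence structure S = (P₁, …, P_{r−1}, I) is equivalent to S_χ for some characteristic function χ : ℕ^d → ℤ with parameters r, d. -/
/-- Two points of `ℕ^d` are *adjacent*: they agree in all but one coordinate,
where they differ by exactly `1`. -/
def GridAdj {d : ℕ} (a b : Fin d → ℕ) : Prop :=
  ∃ j : Fin d, (∀ i : Fin d, i ≠ j → a i = b i) ∧ (a j = b j + 1 ∨ b j = a j + 1)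

/-- The connected component of `a` inside the level set `χ⁻¹({χ a})`:
all points reachable from `a` by paths of adjacent points on which `χ` keeps the value `χ a`. -/
def CompOf {d : ℕ} (χ : (Fin d → ℕ) → ℤ) (a : Fin d → ℕ) : Set (Fin d → ℕ) :=
  {b | Relation.ReflTransGen (fun x y => GridAdj x y ∧ χ x = χ a ∧ χ y = χ a) a b}

/-- `P_χ`: the set of connected components of the level sets `χ⁻¹({r - i})` for `1 ≤ i ≤ r - 1`,
i.e. components of level sets whose value lies in `[1, r-1]`. -/
def Pchi {d : ℕ} (r : ℕ) (χ : (Fin d → ℕ) → ℤ) : Set (Set (Fin d → ℕ)) :=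
  {p | ∃ a : Fin d → ℕ, 1 ≤ χ a ∧ χ a ≤ (r : ℤ) - 1 ∧ p = CompOf χ a}

/-- The incidence relation `I_χ` on components: `(p, q) ∈ I_χ` iff `d(p) < d(q)`
(equivalently, the `χ`-value on `p` exceeds that on `q`) and there are adjacent
`a ∈ p`, `b ∈ q` with `a ≤ b`. -/
def Ichi {d : ℕ} (χ : (Fin d → ℕ) → ℤ) (p q : Set (Fin d → ℕ)) : Prop :=
  ∃ a ∈ p, ∃ b ∈ q, GridAdj a b ∧ a ≤ b ∧ χ b < χ a

/-- A *characteristic function* with parameters `r, d`: `0 ≤ χ ≤ r`, finite support,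
and antitone for the componentwise order on `ℕ^d`. -/
def IsCharFun (r d : ℕ) (χ : (Fin d → ℕ) → ℤ) : Prop :=
  (∀ a, 0 ≤ χ a ∧ χ a ≤ (r : ℤ)) ∧ (Function.support χ).Finite ∧
    ∀ a b : Fin d → ℕ, a ≤ b → χ b ≤ χ a

/-- A rank `kk` incidence structure: a finite set `P` partitioned by the degree map
`deg : P → {1, …, kk}` together with a relation `I` only relating elements of
strictly increasing degree. -/
structure IncStruct (kk : ℕ) where
  P : Type
  finP : Finite P
  deg : P → ℕ
  deg_pos : ∀ p, 1 ≤ deg p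
  deg_le : ∀ p, deg p ≤ kk
  I : P → P → Prop
  I_lt : ∀ p q, I p q → deg p < deg q

/-- The incidence structure `S_χ` associated to a characteristic function `χ`
(with parameters `r, d`) is *equivalent* to the incidence structure `S`:
there is a degree-preserving bijection between `P_χ` and `S.P` under which
`I_χ` and `S.I` have the same transitive closure. -/
def EquivToSchi {d : ℕ} (r : ℕ) (χ : (Fin d → ℕ) → ℤ) {kk : ℕ} (S : IncStruct kk) : Prop :=
  ∃ e : {p : Set (Fin d → ℕ) // p ∈ Pchi r χ} ≃ S.P,
    (∀ p : {p : Set (Fin d → ℕ) // p ∈ Pchi r χ}, ∀ a ∈ p.1,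
      (S.deg (e p) : ℤ) = (r : ℤ) - χ a) ∧
    ∀ p q : {p : Set (Fin d → ℕ) // p ∈ Pchi r χ},
      Relation.TransGen
          (fun u v : {p : Set (Fin d → ℕ) // p ∈ Pchi r χ} => Ichi χ u.1 v.1) p q ↔
        Relation.TransGen S.I (e p) (e q)

namespace S13

attribute [local instance] Classical.propDecidable

def eO (x : ℕ) : ℕ := (x - 1) / 2
def pN (n x : ℕ) : ℕ := eO x / n
def qN (n x : ℕ) : ℕ := eO x % n
def Mx (n x : ℕ) : ℕ := 2 * max (pN n x) (qN n x)
def LL (n : ℕ) : ℕ := 2 * (n * n)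
def NN (n : ℕ) : ℕ := 2 * (n * n) + 2 * n + 2

section Labels

variable (n : ℕ) (K : ℕ → ℕ → Prop)

def jOK (x : ℕ) : Prop := 1 ≤ x ∧ eO x < n * n ∧ K (pN n x) (qN n x)

noncomputable def innerLab (x y u : ℕ) : Option ℕ :=
  if y = 0 then
    if u % 2 = 0 then
      if u / 2 < n ∧ x ≤ LL n then some (u / 2) else none
    else
      if (u + 1) / 2 < n ∧ 1 ≤ x ∧ x ≤ LL n then some ((u + 1) / 2) else none
  else if y = 1 then
    if jOK n K x ∧ ((x % 2 = 0 ∧ u ≤ Mx n x) ∨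
        (x % 2 = 1 ∧ (u = 2 * pN n x ∨ u = 2 * qN n x))) then some (qN n x) else none
  else if y = 2 then
    if jOK n K x ∧ u ≤ Mx n x then some (qN n x) else none
  else none

noncomputable def outerLab (x y u : ℕ) : Option ℕ :=
  if y = 0 then
    if u % 2 = 0 ∧ 1 ≤ x ∧ u / 2 < n ∧ x ≤ LL n then some (u / 2) else none
  else if y = 1 then
    if jOK n K x ∧ x % 2 = 0 ∧ (u = 2 * pN n x ∨ u = 2 * qN n x) then some (qN n x) else none
  else if y = 2 then
    if jOK n K x ∧ x % 2 = 0 ∧ u ≤ Mx n x then some (qN n x) else none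
  else none

lemma pMx (x : ℕ) : 2 * pN n x ≤ Mx n x := by
  have := le_max_left (pN n x) (qN n x); unfold Mx; omega

lemma qMx (x : ℕ) : 2 * qN n x ≤ Mx n x := by
  have := le_max_right (pN n x) (qN n x); unfold Mx; omega

lemma jOK_even_le {x : ℕ} (h : jOK n K x) (hx : x % 2 = 0) : x ≤ LL n := by
  obtain ⟨h1, h2, -⟩ := h
  unfold LL; unfold eO at h2; omega

lemma eO_succ {x : ℕ} (hx : x % 2 = 1) : eO (x + 1) = eO x := by
  unfold eO; omega

lemma jOK_succ {x : ℕ} (hx : x % 2 = 1) (h : jOK n K x) : jOK n K (x + 1) := by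
  obtain ⟨h1, h2, h3⟩ := h
  refine ⟨by omega, by rwa [eO_succ hx], ?_⟩
  unfold pN qN at h3 ⊢; rwa [eO_succ hx]

lemma jOK_pred {x : ℕ} (hx : (x + 1) % 2 = 0) (h : jOK n K (x + 1)) : jOK n K x := by
  obtain ⟨h1, h2, h3⟩ := h
  have hx1 : x % 2 = 1 := by omega
  refine ⟨by omega, by rwa [eO_succ hx1] at h2, ?_⟩
  unfold pN qN at h3 ⊢; rwa [eO_succ hx1] at h3

lemma pN_succ {x : ℕ} (hx : x % 2 = 1) : pN n (x+1) = pN n x := by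
  unfold pN; rw [eO_succ hx]

lemma qN_succ {x : ℕ} (hx : x % 2 = 1) : qN n (x+1) = qN n x := by
  unfold qN; rw [eO_succ hx]

lemma Mx_succ {x : ℕ} (hx : x % 2 = 1) : Mx n (x+1) = Mx n x := by
  unfold Mx; rw [pN_succ, qN_succ] <;> exact hx


lemma jOK_n_pos {x : ℕ} (h : jOK n K x) : 0 < n := by
  have h2 := h.2.1
  by_contra hn
  push_neg at hn
  have : n = 0 := by omega
  rw [this] at h2; simp at h2

lemma pN_lt {x : ℕ} (h : jOK n K x) : pN n x < n := by
  have hn := jOK_n_pos n K h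
  have h2 := h.2.1
  unfold pN
  exact Nat.div_lt_of_lt_mul (by omega)

lemma qN_lt {x : ℕ} (h : jOK n K x) : qN n x < n := Nat.mod_lt _ (jOK_n_pos n K h)

/-- Cover lemma, same position (vertical support). -/
lemma cover_self {x y u k : ℕ} (h : outerLab n K x y u = some k) :
    innerLab n K x y u = some k := by
  unfold outerLab at h
  unfold innerLab
  by_cases hy0 : y = 0
  · rw [if_pos hy0] at h ⊢
    by_cases hc : u % 2 = 0 ∧ 1 ≤ x ∧ u / 2 < n ∧ x ≤ LL n
    · rw [if_pos hc] at h
      rw [if_pos hc.1, if_pos ⟨hc.2.2.1, hc.2.2.2⟩]; exact h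
    · rw [if_neg hc] at h; exact absurd h (by simp)
  · rw [if_neg hy0] at h ⊢
    by_cases hy1 : y = 1
    · rw [if_pos hy1] at h ⊢
      by_cases hc : jOK n K x ∧ x % 2 = 0 ∧ (u = 2 * pN n x ∨ u = 2 * qN n x)
      · rw [if_pos hc] at h
        have hu : u ≤ Mx n x := by
          have := pMx n x; have := qMx n x; rcases hc.2.2 with h' | h' <;> omega
        rw [if_pos ⟨hc.1, Or.inl ⟨hc.2.1, hu⟩⟩]; exact h
      · rw [if_neg hc] at h; exact absurd h (by simp)
    · rw [if_neg hy1] at h ⊢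
      by_cases hy2 : y = 2
      · rw [if_pos hy2] at h ⊢
        by_cases hc : jOK n K x ∧ x % 2 = 0 ∧ u ≤ Mx n x
        · rw [if_pos hc] at h
          rw [if_pos ⟨hc.1, hc.2.2⟩]; exact h
        · rw [if_neg hc] at h; exact absurd h (by simp)
      · rw [if_neg hy2] at h; exact absurd h (by simp)

/-- Cover lemma in the `x` direction. -/
lemma cover_x {x y u k : ℕ} (h : outerLab n K (x+1) y u = some k) :
    innerLab n K x y u = some k := by
  unfold outerLab at h
  unfold innerLab
  by_cases hy0 : y = 0
  · rw [if_pos hy0] at h ⊢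
    by_cases hc : u % 2 = 0 ∧ 1 ≤ x + 1 ∧ u / 2 < n ∧ x + 1 ≤ LL n
    · rw [if_pos hc] at h
      rw [if_pos hc.1, if_pos ⟨hc.2.2.1, by omega⟩]; exact h
    · rw [if_neg hc] at h; exact absurd h (by simp)
  · rw [if_neg hy0] at h ⊢
    by_cases hy1 : y = 1
    · rw [if_pos hy1] at h ⊢
      by_cases hc : jOK n K (x+1) ∧ (x+1) % 2 = 0 ∧ (u = 2 * pN n (x+1) ∨ u = 2 * qN n (x+1))
      · rw [if_pos hc] at h
        have hx1 : x % 2 = 1 := by omega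
        have hj : jOK n K x := jOK_pred n K hc.2.1 hc.1
        rw [if_pos ⟨hj, Or.inr ⟨hx1, by
          rcases hc.2.2 with h' | h'
          · left; rw [h', pN_succ n hx1]
          · right; rw [h', qN_succ n hx1]⟩⟩]
        rw [← qN_succ n hx1]; exact h
      · rw [if_neg hc] at h; exact absurd h (by simp)
    · rw [if_neg hy1] at h ⊢
      by_cases hy2 : y = 2
      · rw [if_pos hy2] at h ⊢
        by_cases hc : jOK n K (x+1) ∧ (x+1) % 2 = 0 ∧ u ≤ Mx n (x+1)
        · rw [if_pos hc] at h
          have hx1 : x % 2 = 1 := by omega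
          have hj : jOK n K x := jOK_pred n K hc.2.1 hc.1
          rw [if_pos ⟨hj, by rw [← Mx_succ n hx1]; exact hc.2.2⟩]
          rw [← qN_succ n hx1]; exact h
        · rw [if_neg hc] at h; exact absurd h (by simp)
      · rw [if_neg hy2] at h; exact absurd h (by simp)

/-- Cover lemma in the `u` direction. -/
lemma cover_u {x y u k : ℕ} (h : outerLab n K x y (u+1) = some k) :
    innerLab n K x y u = some k := by
  unfold outerLab at h
  unfold innerLab
  by_cases hy0 : y = 0
  · rw [if_pos hy0] at h ⊢
    by_cases hc : (u+1) % 2 = 0 ∧ 1 ≤ x ∧ (u+1) / 2 < n ∧ x ≤ LL n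
    · rw [if_pos hc] at h
      have hu : u % 2 = 1 := by omega
      rw [if_neg (by omega), if_pos ⟨hc.2.2.1, hc.2.1, hc.2.2.2⟩]; exact h
    · rw [if_neg hc] at h; exact absurd h (by simp)
  · rw [if_neg hy0] at h ⊢
    by_cases hy1 : y = 1
    · rw [if_pos hy1] at h ⊢
      by_cases hc : jOK n K x ∧ x % 2 = 0 ∧ (u+1 = 2 * pN n x ∨ u+1 = 2 * qN n x)
      · rw [if_pos hc] at h
        have hu : u ≤ Mx n x := by
          have := pMx n x; have := qMx n x; rcases hc.2.2 with h' | h' <;> omega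
        rw [if_pos ⟨hc.1, Or.inl ⟨hc.2.1, hu⟩⟩]; exact h
      · rw [if_neg hc] at h; exact absurd h (by simp)
    · rw [if_neg hy1] at h ⊢
      by_cases hy2 : y = 2
      · rw [if_pos hy2] at h ⊢
        by_cases hc : jOK n K x ∧ x % 2 = 0 ∧ u + 1 ≤ Mx n x
        · rw [if_pos hc] at h
          rw [if_pos ⟨hc.1, by omega⟩]; exact h
        · rw [if_neg hc] at h; exact absurd h (by simp)
      · rw [if_neg hy2] at h; exact absurd h (by simp)

/-- Cover lemma in the `y` direction: the only direction which may produce a contact. -/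
lemma cover_y {x y u k : ℕ} (h : outerLab n K x (y+1) u = some k) :
    ∃ k', innerLab n K x y u = some k' ∧ (k' = k ∨ K k' k) := by
  unfold outerLab at h
  unfold innerLab
  by_cases hy1 : y + 1 = 1
  · -- y = 0, stamps over the backbone: contacts
    have hy0 : y = 0 := by omega
    rw [if_neg (by omega), if_pos hy1] at h
    by_cases hc : jOK n K x ∧ x % 2 = 0 ∧ (u = 2 * pN n x ∨ u = 2 * qN n x)
    · rw [if_pos hc] at h
      injection h with h
      have hxL : x ≤ LL n := jOK_even_le n K hc.1 hc.2.1
      rw [if_pos hy0]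
      rcases hc.2.2 with h' | h'
      · have hpn : pN n x < n := pN_lt n K hc.1
        have hdiv : u / 2 = pN n x := by omega
        refine ⟨pN n x, ?_, Or.inr (by rw [← h]; exact hc.1.2.2)⟩
        rw [if_pos (show u % 2 = 0 by omega), if_pos (by rw [hdiv]; exact ⟨hpn, hxL⟩), hdiv]
      · have hqn : qN n x < n := qN_lt n K hc.1
        have hdiv : u / 2 = qN n x := by omega
        refine ⟨qN n x, ?_, Or.inl h⟩
        rw [if_pos (show u % 2 = 0 by omega), if_pos (by rw [hdiv]; exact ⟨hqn, hxL⟩), hdiv]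
    · rw [if_neg hc] at h; exact absurd h (by simp)
  · by_cases hy2 : y + 1 = 2
    · -- y = 1
      have hy1' : y = 1 := by omega
      rw [if_neg (by omega), if_neg hy1, if_pos hy2] at h
      by_cases hc : jOK n K x ∧ x % 2 = 0 ∧ u ≤ Mx n x
      · rw [if_pos hc] at h
        refine ⟨qN n x, ?_, Or.inl (by injection h)⟩
        rw [if_neg (by omega), if_pos hy1']
        rw [if_pos ⟨hc.1, Or.inl ⟨hc.2.1, hc.2.2⟩⟩]
      · rw [if_neg hc] at h; exact absurd h (by simp)
    · rw [if_neg (by omega), if_neg hy1, if_neg hy2] at h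
      exact absurd h (by simp)

end Labels

section Geometry

variable {d : ℕ} (hd : 4 ≤ d) (r n : ℕ) (c : ℕ → ℤ) (K : ℕ → ℕ → Prop)

def f0 : Fin d := ⟨0, by omega⟩
def f1 : Fin d := ⟨1, by omega⟩
def f2 : Fin d := ⟨2, by omega⟩
def f3 : Fin d := ⟨3, by omega⟩

def good (a : Fin d → ℕ) : Prop := ∀ i : Fin d, 4 ≤ (i : ℕ) → a i = 0

def sum4 (a : Fin d → ℕ) : ℕ := a (f0 hd) + a (f1 hd) + a (f2 hd) + a (f3 hd)

def val : Option ℕ → ℤ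
  | none => 0
  | some k => c k

noncomputable def chi (a : Fin d → ℕ) : ℤ :=
  if good a then
    if sum4 hd a < NN n then (r : ℤ)
    else if sum4 hd a = NN n then
      val c (innerLab n K (a (f0 hd)) (a (f1 hd)) (a (f2 hd)))
    else if sum4 hd a = NN n + 1 then
      val c (outerLab n K (a (f0 hd)) (a (f1 hd)) (a (f2 hd)))
    else 0
  else 0

def mkc (hd : 4 ≤ d) (x y u z : ℕ) : Fin d → ℕ := fun i =>
  if (i : ℕ) = 0 then x else if (i : ℕ) = 1 then y else if (i : ℕ) = 2 then u
  else if (i : ℕ) = 3 then z else 0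

lemma mkc_f0 {x y u z : ℕ} : mkc hd x y u z (f0 hd) = x := by simp [mkc, f0]
lemma mkc_f1 {x y u z : ℕ} : mkc hd x y u z (f1 hd) = y := by simp [mkc, f1]
lemma mkc_f2 {x y u z : ℕ} : mkc hd x y u z (f2 hd) = u := by simp [mkc, f2]
lemma mkc_f3 {x y u z : ℕ} : mkc hd x y u z (f3 hd) = z := by simp [mkc, f3]

lemma mkc_good {x y u z : ℕ} : good (mkc hd x y u z) := by
  intro i hi
  simp only [mkc]
  rw [if_neg (by omega), if_neg (by omega), if_neg (by omega), if_neg (by omega)]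

lemma sum4_mkc {x y u z : ℕ} : sum4 hd (mkc hd x y u z) = x + y + u + z := by
  unfold sum4
  rw [mkc_f0, mkc_f1, mkc_f2, mkc_f3]

/-- reconstruction of a good cell. -/
lemma eq_mkc {a : Fin d → ℕ} (hg : good a) :
    a = mkc hd (a (f0 hd)) (a (f1 hd)) (a (f2 hd)) (a (f3 hd)) := by
  funext i
  rcases Nat.lt_or_ge (i : ℕ) 4 with hi | hi
  · interval_cases h : (i : ℕ)
    · have : i = f0 hd := Fin.ext h
      rw [this, mkc_f0]
    · have : i = f1 hd := Fin.ext h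
      rw [this, mkc_f1]
    · have : i = f2 hd := Fin.ext h
      rw [this, mkc_f2]
    · have : i = f3 hd := Fin.ext h
      rw [this, mkc_f3]
  · rw [hg i hi]
    simp only [mkc]
    rw [if_neg (by omega), if_neg (by omega), if_neg (by omega), if_neg (by omega)]

/-- the inner cell at site (x, y, u). -/

noncomputable def cI (hd : 4 ≤ d) (n x y u : ℕ) : Fin d → ℕ := mkc hd x y u (NN n - (x + y + u))
/-- the outer cell at site (x, y, u). -/

noncomputable def cO (hd : 4 ≤ d) (n x y u : ℕ) : Fin d → ℕ := mkc hd x y u (NN n + 1 - (x + y + u))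

lemma chi_cI {x y u : ℕ} (h : x + y + u ≤ NN n) :
    chi hd r n c K (cI hd n x y u) = val c (innerLab n K x y u) := by
  unfold chi cI
  rw [if_pos (mkc_good hd)]
  rw [sum4_mkc, mkc_f0, mkc_f1, mkc_f2]
  rw [if_neg (by omega), if_pos (by omega)]

lemma chi_cO {x y u : ℕ} (h : x + y + u ≤ NN n) :
    chi hd r n c K (cO hd n x y u) = val c (outerLab n K x y u) := by
  unfold chi cO
  rw [if_pos (mkc_good hd)]
  rw [sum4_mkc, mkc_f0, mkc_f1, mkc_f2]
  rw [if_neg (by omega), if_neg (by omega), if_pos (by omega)]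

end Geometry

section Steps

variable {d : ℕ} (hd : 4 ≤ d) (r n : ℕ) (c : ℕ → ℤ) (K : ℕ → ℕ → Prop)

lemma innerLab_lt {x y u k : ℕ} (h : innerLab n K x y u = some k) : k < n := by
  unfold innerLab at h
  split_ifs at h with h1 h2 h3 h4 h5 h6 h7 <;>
    first
      | (injection h with h; omega)
      | (injection h with h; subst h; exact qN_lt n K (by tauto))
      | exact absurd h (by simp)

lemma outerLab_lt {x y u k : ℕ} (h : outerLab n K x y u = some k) : k < n :=
  innerLab_lt n K (cover_self n K h)

variable (hc0 : ∀ k, k < n → 1 ≤ c k) (hc1 : ∀ k, k < n → c k ≤ (r : ℤ) - 1)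
  (hKv : ∀ p q, K p q → c q < c p)

section ValBounds
include hc0

lemma val_inner_nonneg (x y u : ℕ) : 0 ≤ val c (innerLab n K x y u) := by
  rcases h : innerLab n K x y u with - | k
  · rfl
  · have h1 := innerLab_lt n K h
    have h2 := hc0 k h1
    show (0 : ℤ) ≤ c k
    omega

lemma val_outer_nonneg (x y u : ℕ) : 0 ≤ val c (outerLab n K x y u) := by
  rcases h : outerLab n K x y u with - | k
  · rfl
  · have h1 := outerLab_lt n K h
    have h2 := hc0 k h1
    show (0 : ℤ) ≤ c k
    omega

lemma chi_nonneg (a : Fin d → ℕ) : 0 ≤ chi hd r n c K a := by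
  unfold chi
  split_ifs <;>
    first
      | positivity
      | exact val_inner_nonneg n c K hc0 _ _ _
      | exact val_outer_nonneg n c K hc0 _ _ _
      | rfl

omit hc0
include hc1

lemma val_inner_le (x y u : ℕ) : val c (innerLab n K x y u) ≤ (r : ℤ) := by
  rcases h : innerLab n K x y u with - | k
  · show (0:ℤ) ≤ r; positivity
  · have h1 := innerLab_lt n K h
    have h2 := hc1 k h1
    show c k ≤ (r : ℤ)
    omega

lemma val_outer_le (x y u : ℕ) : val c (outerLab n K x y u) ≤ (r : ℤ) := by
  rcases h : outerLab n K x y u with - | k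
  · show (0:ℤ) ≤ r; positivity
  · have h1 := outerLab_lt n K h
    have h2 := hc1 k h1
    show c k ≤ (r : ℤ)
    omega

lemma chi_le (a : Fin d → ℕ) : chi hd r n c K a ≤ (r : ℤ) := by
  unfold chi
  split_ifs <;>
    first
      | rfl
      | exact val_inner_le r n c K hc1 _ _ _
      | exact val_outer_le r n c K hc1 _ _ _
      | positivity

end ValBounds

include hc0 hKv in
/-- comparison of outer and inner values across a cover pair. -/
lemma val_cover {x y u x' y' u' : ℕ}
    (hcov : ∀ k, outerLab n K x' y' u' = some k →
      ∃ k', innerLab n K x y u = some k' ∧ (k' = k ∨ K k' k)) :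
    val c (outerLab n K x' y' u') ≤ val c (innerLab n K x y u) := by
  rcases h : outerLab n K x' y' u' with - | k
  · exact val_inner_nonneg n c K hc0 _ _ _
  · obtain ⟨k', h2, h3⟩ := hcov k h
    rw [h2]
    rcases h3 with rfl | h3
    · rfl
    · have := hKv _ _ h3
      show c k ≤ c k'
      omega

include hc0 hc1 hKv in
/-- single-step antitonicity of chi. -/
lemma chi_step (a : Fin d → ℕ) (j : Fin d) :
    chi hd r n c K (Function.update a j (a j + 1)) ≤ chi hd r n c K a := by
  set b := Function.update a j (a j + 1) with hb
  have hbj : b j = a j + 1 := by rw [hb, Function.update_self]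
  have hbi : ∀ i, i ≠ j → b i = a i := fun i hi => by rw [hb, Function.update_of_ne hi]
  by_cases hga : good a
  · by_cases hj4 : 4 ≤ (j : ℕ)
    · -- b is not good
      have : ¬ good b := fun hgb => by have := hgb j hj4; omega
      have e1 : chi hd r n c K b = 0 := by unfold chi; rw [if_neg this]
      rw [e1]
      exact chi_nonneg hd r n c K hc0 a
    · push_neg at hj4
      have hgb : good b := by
        intro i hi
        rw [hbi i (fun h => by subst h; omega)]
        exact hga i hi
      -- identify j among f0..f3, compute sums and coords
      have hf0 : (f0 hd : ℕ) = 0 := rfl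
      have hf1 : (f1 hd : ℕ) = 1 := rfl
      have hf2 : (f2 hd : ℕ) = 2 := rfl
      have hf3 : (f3 hd : ℕ) = 3 := rfl
      have hsum : sum4 hd b = sum4 hd a + 1 ∧
          ((b (f0 hd) = a (f0 hd) + 1 ∧ b (f1 hd) = a (f1 hd) ∧ b (f2 hd) = a (f2 hd)) ∨
           (b (f0 hd) = a (f0 hd) ∧ b (f1 hd) = a (f1 hd) + 1 ∧ b (f2 hd) = a (f2 hd)) ∨
           (b (f0 hd) = a (f0 hd) ∧ b (f1 hd) = a (f1 hd) ∧ b (f2 hd) = a (f2 hd) + 1) ∨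
           (b (f0 hd) = a (f0 hd) ∧ b (f1 hd) = a (f1 hd) ∧ b (f2 hd) = a (f2 hd))) := by
        interval_cases hjv : (j : ℕ)
        · have hj : j = f0 hd := Fin.ext (by omega)
          subst hj
          have e1 := hbi (f1 hd) (by intro h; rw [h] at hf1; omega)
          have e2 := hbi (f2 hd) (by intro h; rw [h] at hf2; omega)
          have e3 := hbi (f3 hd) (by intro h; rw [h] at hf3; omega)
          refine ⟨by unfold sum4; omega, Or.inl ⟨hbj, e1, e2⟩⟩
        · have hj : j = f1 hd := Fin.ext (by omega)
          subst hj
          have e1 := hbi (f0 hd) (by intro h; rw [h] at hf0; omega)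
          have e2 := hbi (f2 hd) (by intro h; rw [h] at hf2; omega)
          have e3 := hbi (f3 hd) (by intro h; rw [h] at hf3; omega)
          refine ⟨by unfold sum4; omega, Or.inr (Or.inl ⟨e1, hbj, e2⟩)⟩
        · have hj : j = f2 hd := Fin.ext (by omega)
          subst hj
          have e1 := hbi (f0 hd) (by intro h; rw [h] at hf0; omega)
          have e2 := hbi (f1 hd) (by intro h; rw [h] at hf1; omega)
          have e3 := hbi (f3 hd) (by intro h; rw [h] at hf3; omega)
          refine ⟨by unfold sum4; omega, Or.inr (Or.inr (Or.inl ⟨e1, e2, hbj⟩))⟩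
        · have hj : j = f3 hd := Fin.ext (by omega)
          subst hj
          have e1 := hbi (f0 hd) (by intro h; rw [h] at hf0; omega)
          have e2 := hbi (f1 hd) (by intro h; rw [h] at hf1; omega)
          have e3 := hbi (f2 hd) (by intro h; rw [h] at hf2; omega)
          refine ⟨by unfold sum4; omega, Or.inr (Or.inr (Or.inr ⟨e1, e2, e3⟩))⟩
      obtain ⟨hs, hcoords⟩ := hsum
      unfold chi
      rw [if_pos hga, if_pos hgb]
      rcases Nat.lt_trichotomy (sum4 hd a + 1) (NN n) with h | h | h
      · rw [if_pos (by omega), if_pos (by omega)]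
      · -- b at inner level
        rw [hs, if_neg (by omega), if_pos h, if_pos (by omega)]
        calc val c (innerLab n K (b (f0 hd)) (b (f1 hd)) (b (f2 hd))) ≤ (r : ℤ) :=
              val_inner_le r n c K hc1 _ _ _
          _ = _ := rfl
      · rcases Nat.lt_trichotomy (sum4 hd a) (NN n) with h2 | h2 | h2
        · omega
        · -- a inner, b outer: the interesting case
          rw [hs, if_neg (by omega), if_neg (by omega), if_pos (by omega),
            if_neg (by omega), if_pos h2]
          rcases hcoords with ⟨e0, e1, e2⟩ | ⟨e0, e1, e2⟩ | ⟨e0, e1, e2⟩ | ⟨e0, e1, e2⟩ <;>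
            rw [e0, e1, e2]
          · exact val_cover n c K hc0 hKv (fun k h => ⟨k, cover_x n K h, Or.inl rfl⟩)
          · exact val_cover n c K hc0 hKv (fun k h => cover_y n K h)
          · exact val_cover n c K hc0 hKv (fun k h => ⟨k, cover_u n K h, Or.inl rfl⟩)
          · exact val_cover n c K hc0 hKv (fun k h => ⟨k, cover_self n K h, Or.inl rfl⟩)
        · -- a outer or beyond
          rw [hs, if_neg (by omega), if_neg (by omega), if_neg (by omega)]
          rcases Nat.lt_trichotomy (sum4 hd a) (NN n + 1) with h3 | h3 | h3
          · omega
          · rw [if_neg (by omega), if_neg (by omega), if_pos h3]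
            exact val_outer_nonneg n c K hc0 _ _ _
          · rw [if_neg (by omega), if_neg (by omega), if_neg (by omega)]
  · have hngb : ¬ good b := by
      intro hgb
      apply hga
      intro i hi
      by_cases h : i = j
      · subst h
        have := hgb i hi; omega
      · rw [← hbi i h]; exact hgb i hi
    unfold chi
    rw [if_neg hga, if_neg hngb]

end Steps

section CharFun

variable {d : ℕ} (hd : 4 ≤ d) (r n : ℕ) (c : ℕ → ℤ) (K : ℕ → ℕ → Prop)

lemma antitone_of_step (f : (Fin d → ℕ) → ℤ)
    (hf : ∀ a (j : Fin d), f (Function.update a j (a j + 1)) ≤ f a) :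
    ∀ a b : Fin d → ℕ, a ≤ b → f b ≤ f a := by
  have key : ∀ m (a b : Fin d → ℕ), a ≤ b → (∑ i, (b i - a i)) = m → f b ≤ f a := by
    intro m
    induction m with
    | zero =>
      intro a b hab hs
      have : a = b := funext fun i => le_antisymm (hab i) (by
        have h2 : b i - a i = 0 := by
          simpa using Finset.sum_eq_zero_iff.mp hs i (Finset.mem_univ i)
        exact Nat.le_of_sub_eq_zero h2)
      rw [this]
    | succ m ih =>
      intro a b hab hs
      have hne : ∃ i, a i < b i := by
        by_contra hno; push_neg at hno
        have hz : ∀ i ∈ Finset.univ, b i - a i = 0 := fun i _ => by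
          have := hab i; have := hno i; omega
        rw [Finset.sum_congr rfl hz] at hs; simp at hs
      obtain ⟨i0, hi0⟩ := hne
      set a' := Function.update a i0 (a i0 + 1) with ha'
      have h1 : a' ≤ b := by
        intro i; by_cases h : i = i0
        · subst h; rw [ha', Function.update_self]; exact hi0
        · rw [ha', Function.update_of_ne h]; exact hab i
      have e1 : (∑ i, (b i - a' i)) = (b i0 - a' i0) + ∑ i ∈ Finset.univ.erase i0, (b i - a' i) :=
        (Finset.add_sum_erase _ _ (Finset.mem_univ i0)).symm
      have e2 : (∑ i, (b i - a i)) = (b i0 - a i0) + ∑ i ∈ Finset.univ.erase i0, (b i - a i) :=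
        (Finset.add_sum_erase _ _ (Finset.mem_univ i0)).symm
      have e3 : ∑ i ∈ Finset.univ.erase i0, (b i - a' i) = ∑ i ∈ Finset.univ.erase i0, (b i - a i) :=
        Finset.sum_congr rfl fun i hi => by
          rw [ha', Function.update_of_ne (Finset.ne_of_mem_erase hi)]
      have e4 : a' i0 = a i0 + 1 := by rw [ha', Function.update_self]
      have h2 : (∑ i, (b i - a' i)) = m := by
        rw [e1, e3, e4]
        rw [e2] at hs
        omega
      exact le_trans (ih a' b h1 h2) (hf a i0)
  intro a b hab
  exact key _ a b hab rfl

variable (hc0 : ∀ k, k < n → 1 ≤ c k) (hc1 : ∀ k, k < n → c k ≤ (r : ℤ) - 1)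
  (hKv : ∀ p q, K p q → c q < c p)

include hc0 hc1 hKv in
lemma chi_antitone : ∀ a b : Fin d → ℕ, a ≤ b → chi hd r n c K b ≤ chi hd r n c K a :=
  antitone_of_step _ (fun a j => chi_step hd r n c K hc0 hc1 hKv a j)

lemma chi_support_finite : (Function.support (chi hd r n c K)).Finite := by
  apply Set.Finite.subset (Set.finite_Icc (fun _ : Fin d => 0) (fun _ => NN n + 1))
  intro a ha
  simp only [Function.mem_support] at ha
  have hga : good a := by
    by_contra h
    exact ha (by unfold chi; rw [if_neg h])
  have hs : sum4 hd a ≤ NN n + 1 := by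
    by_contra h
    push_neg at h
    exact ha (by unfold chi; rw [if_pos hga, if_neg (by omega), if_neg (by omega), if_neg (by omega)])
  rw [Set.mem_Icc]
  constructor
  · intro i; exact Nat.zero_le _
  · intro i
    show a i ≤ NN n + 1
    rcases Nat.lt_or_ge (i : ℕ) 4 with hi | hi
    · unfold sum4 at hs
      interval_cases h : (i : ℕ)
      · rw [show i = f0 hd from Fin.ext h] ; omega
      · rw [show i = f1 hd from Fin.ext h] ; omega
      · rw [show i = f2 hd from Fin.ext h] ; omega
      · rw [show i = f3 hd from Fin.ext h] ; omega
    · rw [hga i hi]; omega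

include hc0 hc1 hKv in
lemma chi_ischar (hr : 1 ≤ r) : IsCharFun r d (chi hd r n c K) :=
  ⟨fun a => ⟨chi_nonneg hd r n c K hc0 a, chi_le hd r n c K hc1 a⟩,
   chi_support_finite hd r n c K,
   chi_antitone hd r n c K hc0 hc1 hKv⟩

end CharFun

section Regions

variable {d : ℕ} (hd : 4 ≤ d) (r n : ℕ) (c : ℕ → ℤ) (K : ℕ → ℕ → Prop)

def Rg (k : ℕ) : Set (Fin d → ℕ) :=
  {a | good a ∧
    ((sum4 hd a = NN n ∧ innerLab n K (a (f0 hd)) (a (f1 hd)) (a (f2 hd)) = some k) ∨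
     (sum4 hd a = NN n + 1 ∧ outerLab n K (a (f0 hd)) (a (f1 hd)) (a (f2 hd)) = some k))}

lemma Rg_lt {k : ℕ} {a : Fin d → ℕ} (ha : a ∈ Rg hd n K k) : k < n := by
  rcases ha.2 with ⟨-, h⟩ | ⟨-, h⟩
  · exact innerLab_lt n K h
  · exact outerLab_lt n K h

lemma chi_Rg {k : ℕ} {a : Fin d → ℕ} (ha : a ∈ Rg hd n K k) : chi hd r n c K a = c k := by
  obtain ⟨hg, hcase⟩ := ha
  unfold chi
  rw [if_pos hg]
  rcases hcase with ⟨hs, h⟩ | ⟨hs, h⟩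
  · rw [if_neg (by omega), if_pos hs, h]; rfl
  · rw [if_neg (by omega), if_neg (by omega), if_pos hs, h]; rfl

lemma labeled_of_chi (hr : 1 ≤ r) {a : Fin d → ℕ} {v : ℤ} (h : chi hd r n c K a = v)
    (h1 : 1 ≤ v) (h2 : v ≤ (r : ℤ) - 1) : ∃ k, a ∈ Rg hd n K k ∧ c k = v := by
  unfold chi at h
  by_cases hg : good a
  · rw [if_pos hg] at h
    rcases Nat.lt_trichotomy (sum4 hd a) (NN n) with hs | hs | hs
    · rw [if_pos hs] at h; omega
    · rw [if_neg (by omega), if_pos hs] at h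
      rcases hl : innerLab n K (a (f0 hd)) (a (f1 hd)) (a (f2 hd)) with - | k
      · rw [hl] at h; simp [val] at h; omega
      · rw [hl] at h
        exact ⟨k, ⟨hg, Or.inl ⟨hs, hl⟩⟩, h⟩
    · rcases Nat.lt_trichotomy (sum4 hd a) (NN n + 1) with hs2 | hs2 | hs2
      · omega
      · rw [if_neg (by omega), if_neg (by omega), if_pos hs2] at h
        rcases hl : outerLab n K (a (f0 hd)) (a (f1 hd)) (a (f2 hd)) with - | k
        · rw [hl] at h; simp [val] at h; omega
        · rw [hl] at h
          exact ⟨k, ⟨hg, Or.inr ⟨hs2, hl⟩⟩, h⟩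
      · rw [if_neg (by omega), if_neg (by omega), if_neg (by omega)] at h; omega
  · rw [if_neg hg] at h; omega

lemma gridadj_symm {a b : Fin d → ℕ} (h : GridAdj a b) : GridAdj b a := by
  obtain ⟨j, heq, hor⟩ := h
  exact ⟨j, fun i hi => (heq i hi).symm, hor.symm⟩

lemma gridadj_cases {a b : Fin d → ℕ} (hga : good a) (hgb : good b) (hadj : GridAdj a b) :
    ((a (f1 hd) = b (f1 hd) ∧ a (f2 hd) = b (f2 hd) ∧ a (f3 hd) = b (f3 hd)) ∧
      (a (f0 hd) = b (f0 hd) + 1 ∨ b (f0 hd) = a (f0 hd) + 1)) ∨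
    ((a (f0 hd) = b (f0 hd) ∧ a (f2 hd) = b (f2 hd) ∧ a (f3 hd) = b (f3 hd)) ∧
      (a (f1 hd) = b (f1 hd) + 1 ∨ b (f1 hd) = a (f1 hd) + 1)) ∨
    ((a (f0 hd) = b (f0 hd) ∧ a (f1 hd) = b (f1 hd) ∧ a (f3 hd) = b (f3 hd)) ∧
      (a (f2 hd) = b (f2 hd) + 1 ∨ b (f2 hd) = a (f2 hd) + 1)) ∨
    ((a (f0 hd) = b (f0 hd) ∧ a (f1 hd) = b (f1 hd) ∧ a (f2 hd) = b (f2 hd)) ∧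
      (a (f3 hd) = b (f3 hd) + 1 ∨ b (f3 hd) = a (f3 hd) + 1)) := by
  obtain ⟨j, heq, hor⟩ := hadj
  have hf0 : (f0 hd : ℕ) = 0 := rfl
  have hf1 : (f1 hd : ℕ) = 1 := rfl
  have hf2 : (f2 hd : ℕ) = 2 := rfl
  have hf3 : (f3 hd : ℕ) = 3 := rfl
  have hj4 : (j : ℕ) < 4 := by
    by_contra h4
    push_neg at h4
    have h5 := hga j h4
    have h6 := hgb j h4
    omega
  interval_cases hjv : (j : ℕ)
  · have hj : j = f0 hd := Fin.ext (by omega)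
    subst hj
    exact Or.inl ⟨⟨heq _ (by intro h; rw [h] at hf1; omega),
      heq _ (by intro h; rw [h] at hf2; omega),
      heq _ (by intro h; rw [h] at hf3; omega)⟩, hor⟩
  · have hj : j = f1 hd := Fin.ext (by omega)
    subst hj
    exact Or.inr (Or.inl ⟨⟨heq _ (by intro h; rw [h] at hf0; omega),
      heq _ (by intro h; rw [h] at hf2; omega),
      heq _ (by intro h; rw [h] at hf3; omega)⟩, hor⟩)
  · have hj : j = f2 hd := Fin.ext (by omega)
    subst hj
    exact Or.inr (Or.inr (Or.inl ⟨⟨heq _ (by intro h; rw [h] at hf0; omega),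
      heq _ (by intro h; rw [h] at hf1; omega),
      heq _ (by intro h; rw [h] at hf3; omega)⟩, hor⟩))
  · have hj : j = f3 hd := Fin.ext (by omega)
    subst hj
    exact Or.inr (Or.inr (Or.inr ⟨⟨heq _ (by intro h; rw [h] at hf0; omega),
      heq _ (by intro h; rw [h] at hf1; omega),
      heq _ (by intro h; rw [h] at hf2; omega)⟩, hor⟩))

lemma adj_sum_or {a b : Fin d → ℕ} (hga : good a) (hgb : good b) (hadj : GridAdj a b) :
    sum4 hd b = sum4 hd a + 1 ∨ sum4 hd a = sum4 hd b + 1 := by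
  have h := gridadj_cases hd hga hgb hadj
  unfold sum4
  rcases h with ⟨⟨e1,e2,e3⟩,h|h⟩|⟨⟨e1,e2,e3⟩,h|h⟩|⟨⟨e1,e2,e3⟩,h|h⟩|⟨⟨e1,e2,e3⟩,h|h⟩ <;> omega

/-- the master covering lemma: if `b = a + e_i` at the outer level, the outer label of `b`
matches the inner label of `a` or forms a contact. -/
lemma adj_cover {a b : Fin d → ℕ} (hga : good a) (hgb : good b) (hadj : GridAdj a b)
    (hs : sum4 hd b = sum4 hd a + 1) {k : ℕ}
    (hlab : outerLab n K (b (f0 hd)) (b (f1 hd)) (b (f2 hd)) = some k) :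
    ∃ k', innerLab n K (a (f0 hd)) (a (f1 hd)) (a (f2 hd)) = some k' ∧ (k' = k ∨ K k' k) := by
  have h := gridadj_cases hd hga hgb hadj
  unfold sum4 at hs
  rcases h with ⟨⟨e1,e2,e3⟩,h|h⟩|⟨⟨e1,e2,e3⟩,h|h⟩|⟨⟨e1,e2,e3⟩,h|h⟩|⟨⟨e1,e2,e3⟩,h|h⟩
  · omega
  · rw [h, ← e1, ← e2] at hlab
    exact ⟨k, cover_x n K hlab, Or.inl rfl⟩
  · omega
  · rw [h, ← e1, ← e2] at hlab
    exact cover_y n K hlab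
  · omega
  · rw [h, ← e1, ← e2] at hlab
    exact ⟨k, cover_u n K hlab, Or.inl rfl⟩
  · omega
  · rw [← e1, ← e2, ← e3] at hlab
    exact ⟨k, cover_self n K hlab, Or.inl rfl⟩

variable (hKv : ∀ p q, K p q → c q < c p)

include hKv in
/-- adjacent cells with labels of equal value have equal label. -/
lemma adj_same_value {a b : Fin d → ℕ} {j k : ℕ} (ha : a ∈ Rg hd n K j) (hb : b ∈ Rg hd n K k)
    (hadj : GridAdj a b) (hv : c j = c k) : j = k := by
  rcases adj_sum_or hd ha.1 hb.1 hadj with hs | hs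
  · -- b outer, a inner
    have hbo : sum4 hd b = NN n + 1 := by
      rcases ha.2 with ⟨h1, -⟩ | ⟨h1, -⟩ <;> rcases hb.2 with ⟨h2, -⟩ | ⟨h2, -⟩ <;> omega
    have hai : sum4 hd a = NN n := by
      rcases ha.2 with ⟨h1, -⟩ | ⟨h1, -⟩ <;> omega
    have hblab : outerLab n K (b (f0 hd)) (b (f1 hd)) (b (f2 hd)) = some k := by
      rcases hb.2 with ⟨h2, -⟩ | ⟨-, h3⟩
      · omega
      · exact h3
    have halab : innerLab n K (a (f0 hd)) (a (f1 hd)) (a (f2 hd)) = some j := by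
      rcases ha.2 with ⟨-, h3⟩ | ⟨h2, -⟩
      · exact h3
      · omega
    obtain ⟨k', hk', hck⟩ := adj_cover hd n K ha.1 hb.1 hadj (by omega) hblab
    rw [halab] at hk'
    injection hk' with hk'
    subst hk'
    rcases hck with h | h
    · exact h
    · have := hKv _ _ h; omega
  · -- a outer, b inner
    have hbo : sum4 hd a = NN n + 1 := by
      rcases ha.2 with ⟨h1, -⟩ | ⟨h1, -⟩ <;> rcases hb.2 with ⟨h2, -⟩ | ⟨h2, -⟩ <;> omega
    have hai : sum4 hd b = NN n := by
      rcases hb.2 with ⟨h1, -⟩ | ⟨h1, -⟩ <;> omega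
    have halab : outerLab n K (a (f0 hd)) (a (f1 hd)) (a (f2 hd)) = some j := by
      rcases ha.2 with ⟨h2, -⟩ | ⟨-, h3⟩
      · omega
      · exact h3
    have hblab : innerLab n K (b (f0 hd)) (b (f1 hd)) (b (f2 hd)) = some k := by
      rcases hb.2 with ⟨-, h3⟩ | ⟨h2, -⟩
      · exact h3
      · omega
    obtain ⟨k', hk', hck⟩ := adj_cover hd n K hb.1 ha.1 (gridadj_symm hadj) (by omega) halab
    rw [hblab] at hk'
    injection hk' with hk'
    subst hk'
    rcases hck with h | h
    · exact h.symm
    · have := hKv _ _ h; omega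

variable (hc0 : ∀ k, k < n → 1 ≤ c k) (hc1 : ∀ k, k < n → c k ≤ (r : ℤ) - 1)

include hKv hc0 hc1 in
/-- the component of a point of `Rg k` stays inside `Rg k`. -/
lemma comp_sub {k : ℕ} {a0 : Fin d → ℕ} (h : a0 ∈ Rg hd n K k) :
    CompOf (chi hd r n c K) a0 ⊆ Rg hd n K k := by
  intro b hb
  have hk : k < n := Rg_lt hd n K h
  have hval : chi hd r n c K a0 = c k := chi_Rg hd r n c K h
  induction hb with
  | refl => exact h
  | tail hxy hstep ih =>
    obtain ⟨hadj, hv1, hv2⟩ := hstep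
    rw [hval] at hv2
    obtain ⟨k'', hmem, hck⟩ := labeled_of_chi hd r n c K
      (show 1 ≤ r by
        have := hc0 k hk
        have := hc1 k hk
        omega)
      hv2 (by have := hc0 k hk; omega) (by have := hc1 k hk; omega)
    have := adj_same_value hd n c K hKv ih hmem hadj (by omega)
    rwa [← this] at hmem

end Regions

section Conn

variable {d : ℕ} (hd : 4 ≤ d) (r n : ℕ) (c : ℕ → ℤ) (K : ℕ → ℕ → Prop)

def rel (v : ℤ) (a b : Fin d → ℕ) : Prop :=
  GridAdj a b ∧ chi hd r n c K a = v ∧ chi hd r n c K b = v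

lemma rel_symm {v : ℤ} : Symmetric (rel hd r n c K v) := by
  rintro a b ⟨h1, h2, h3⟩
  exact ⟨gridadj_symm h1, h3, h2⟩

lemma rt_symm {v : ℤ} {a b : Fin d → ℕ}
    (h : Relation.ReflTransGen (rel hd r n c K v) a b) :
    Relation.ReflTransGen (rel hd r n c K v) b a :=
  haveI : Std.Symm (rel hd r n c K v) := ⟨fun _ _ h' => rel_symm hd r n c K h'⟩
  (Relation.ReflTransGen.symmetric (r := rel hd r n c K v)).symm _ _ h

lemma gridadj_mk0 {x y u z : ℕ} : GridAdj (mkc hd x y u z) (mkc hd (x+1) y u z) := by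
  refine ⟨f0 hd, fun i hi => ?_, Or.inr ?_⟩
  · have h : (i : ℕ) ≠ 0 := fun h => hi (Fin.ext h)
    simp [mkc, h]
  · rw [mkc_f0, mkc_f0]

lemma gridadj_mk1 {x y u z : ℕ} : GridAdj (mkc hd x y u z) (mkc hd x (y+1) u z) := by
  refine ⟨f1 hd, fun i hi => ?_, Or.inr ?_⟩
  · have h : (i : ℕ) ≠ 1 := fun h => hi (Fin.ext h)
    simp [mkc, h]
  · rw [mkc_f1, mkc_f1]

lemma gridadj_mk2 {x y u z : ℕ} : GridAdj (mkc hd x y u z) (mkc hd x y (u+1) z) := by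
  refine ⟨f2 hd, fun i hi => ?_, Or.inr ?_⟩
  · have h : (i : ℕ) ≠ 2 := fun h => hi (Fin.ext h)
    simp [mkc, h]
  · rw [mkc_f2, mkc_f2]

lemma gridadj_mk3 {x y u z : ℕ} : GridAdj (mkc hd x y u z) (mkc hd x y u (z+1)) := by
  refine ⟨f3 hd, fun i hi => ?_, Or.inr ?_⟩
  · have h : (i : ℕ) ≠ 3 := fun h => hi (Fin.ext h)
    simp [mkc, h]
  · rw [mkc_f3, mkc_f3]

/-- vertical adjacency inner-outer at the same site. -/
lemma adjIO {x y u : ℕ} (h : x + y + u ≤ NN n) :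
    GridAdj (cI hd n x y u) (cO hd n x y u) := by
  unfold cI cO
  rw [show NN n + 1 - (x + y + u) = (NN n - (x + y + u)) + 1 by omega]
  exact gridadj_mk3 hd

lemma adjXO {x y u : ℕ} (h : x + 1 + y + u ≤ NN n) :
    GridAdj (cI hd n x y u) (cO hd n (x+1) y u) := by
  unfold cI cO
  rw [show NN n + 1 - (x + 1 + y + u) = NN n - (x + y + u) by omega]
  exact gridadj_mk0 hd

lemma adjYO {x y u : ℕ} (h : x + (y + 1) + u ≤ NN n) :
    GridAdj (cI hd n x y u) (cO hd n x (y+1) u) := by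
  unfold cI cO
  rw [show NN n + 1 - (x + (y + 1) + u) = NN n - (x + y + u) by omega]
  exact gridadj_mk1 hd

lemma adjUO {x y u : ℕ} (h : x + y + (u + 1) ≤ NN n) :
    GridAdj (cI hd n x y u) (cO hd n x y (u+1)) := by
  unfold cI cO
  rw [show NN n + 1 - (x + y + (u + 1)) = NN n - (x + y + u) by omega]
  exact gridadj_mk2 hd

/-- relation steps -/
lemma relIO {x y u k : ℕ} (hin : innerLab n K x y u = some k)
    (hout : outerLab n K x y u = some k) (hs : x + y + u ≤ NN n) :
    rel hd r n c K (c k) (cI hd n x y u) (cO hd n x y u) :=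
  ⟨adjIO hd n hs, by rw [chi_cI hd r n c K hs, hin]; rfl, by rw [chi_cO hd r n c K hs, hout]; rfl⟩

lemma relXO {x y u k : ℕ} (hin : innerLab n K x y u = some k)
    (hout : outerLab n K (x+1) y u = some k) (hs : x + 1 + y + u ≤ NN n) :
    rel hd r n c K (c k) (cI hd n x y u) (cO hd n (x+1) y u) :=
  ⟨adjXO hd n hs, by rw [chi_cI hd r n c K (by omega), hin]; rfl,
   by rw [chi_cO hd r n c K (by omega), hout]; rfl⟩

lemma relYO {x y u k : ℕ} (hin : innerLab n K x y u = some k)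
    (hout : outerLab n K x (y+1) u = some k) (hs : x + (y + 1) + u ≤ NN n) :
    rel hd r n c K (c k) (cI hd n x y u) (cO hd n x (y+1) u) :=
  ⟨adjYO hd n hs, by rw [chi_cI hd r n c K (by omega), hin]; rfl,
   by rw [chi_cO hd r n c K (by omega), hout]; rfl⟩

lemma relUO {x y u k : ℕ} (hin : innerLab n K x y u = some k)
    (hout : outerLab n K x y (u+1) = some k) (hs : x + y + (u + 1) ≤ NN n) :
    rel hd r n c K (c k) (cI hd n x y u) (cO hd n x y (u+1)) :=
  ⟨adjUO hd n hs, by rw [chi_cI hd r n c K (by omega), hin]; rfl,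
   by rw [chi_cO hd r n c K (by omega), hout]; rfl⟩

/-- label facts -/
lemma lab_bkbI {x k : ℕ} (hk : k < n) (hx : x ≤ LL n) :
    innerLab n K x 0 (2*k) = some k := by
  unfold innerLab
  rw [if_pos rfl, if_pos (show 2*k % 2 = 0 by omega),
    if_pos (show 2*k/2 < n ∧ x ≤ LL n by constructor <;> omega)]
  congr 1; omega

lemma lab_bkbO {x k : ℕ} (hk : k < n) (hx1 : 1 ≤ x) (hx : x ≤ LL n) :
    outerLab n K x 0 (2*k) = some k := by
  unfold outerLab
  rw [if_pos rfl,
    if_pos (show 2*k % 2 = 0 ∧ 1 ≤ x ∧ 2*k/2 < n ∧ x ≤ LL n by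
      refine ⟨by omega, hx1, by omega, hx⟩)]
  congr 1; omega

lemma lab_padI {x u k : ℕ} (hk : k < n) (hu : u % 2 = 1) (huk : (u+1)/2 = k)
    (hx1 : 1 ≤ x) (hx : x ≤ LL n) :
    innerLab n K x 0 u = some k := by
  unfold innerLab
  rw [if_pos rfl, if_neg (by omega), if_pos (show (u+1)/2 < n ∧ 1 ≤ x ∧ x ≤ LL n by
    exact ⟨by omega, hx1, hx⟩)]
  congr 1

lemma lab_j1I {x v : ℕ} (hj : jOK n K x) (hx : x % 2 = 0) (hv : v ≤ Mx n x) :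
    innerLab n K x 1 v = some (qN n x) := by
  unfold innerLab
  rw [if_neg (by omega), if_pos rfl, if_pos ⟨hj, Or.inl ⟨hx, hv⟩⟩]

lemma lab_j1I' {x v : ℕ} (hj : jOK n K x) (hx : x % 2 = 1)
    (hv : v = 2 * pN n x ∨ v = 2 * qN n x) :
    innerLab n K x 1 v = some (qN n x) := by
  unfold innerLab
  rw [if_neg (by omega), if_pos rfl, if_pos ⟨hj, Or.inr ⟨hx, hv⟩⟩]

lemma lab_j2I {x v : ℕ} (hj : jOK n K x) (hv : v ≤ Mx n x) :
    innerLab n K x 2 v = some (qN n x) := by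
  unfold innerLab
  rw [if_neg (by omega), if_neg (by omega), if_pos rfl, if_pos ⟨hj, hv⟩]

lemma lab_j1O {x v : ℕ} (hj : jOK n K x) (hx : x % 2 = 0)
    (hv : v = 2 * pN n x ∨ v = 2 * qN n x) :
    outerLab n K x 1 v = some (qN n x) := by
  unfold outerLab
  rw [if_neg (by omega), if_pos rfl, if_pos ⟨hj, hx, hv⟩]

lemma lab_j2O {x v : ℕ} (hj : jOK n K x) (hx : x % 2 = 0) (hv : v ≤ Mx n x) :
    outerLab n K x 2 v = some (qN n x) := by
  unfold outerLab
  rw [if_neg (by omega), if_neg (by omega), if_pos rfl, if_pos ⟨hj, hx, hv⟩]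

end Conn

section Paths

variable {d : ℕ} (hd : 4 ≤ d) (r n : ℕ) (c : ℕ → ℤ) (K : ℕ → ℕ → Prop)

/-- the anchor cell of element `k`. -/
noncomputable def anch (k : ℕ) : Fin d → ℕ := cI hd n 0 0 (2*k)

local notation "RT" k => Relation.ReflTransGen (rel hd r n c K (c k))

lemma conn_bkb {k : ℕ} (hk : k < n) : ∀ x, x ≤ LL n →
    (RT k) (anch hd n k) (cI hd n x 0 (2*k)) := by
  have hNN : NN n = 2*(n*n)+2*n+2 := rfl
  have hLL : LL n = 2*(n*n) := rfl
  intro x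
  induction x with
  | zero => intro _; exact .refl
  | succ x ih =>
    intro hx
    refine ((ih (by omega)).tail
      (relXO hd r n c K (lab_bkbI n K hk (by omega)) (lab_bkbO n K hk (by omega) hx)
        (by omega))).tail
      (rel_symm hd r n c K (relIO hd r n c K (lab_bkbI n K hk hx)
        (lab_bkbO n K hk (by omega) hx) (by omega)))

lemma conn_bkbO {k x : ℕ} (hk : k < n) (hx1 : 1 ≤ x) (hx : x ≤ LL n) :
    (RT k) (anch hd n k) (cO hd n x 0 (2*k)) := by
  have hNN : NN n = 2*(n*n)+2*n+2 := rfl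
  have hLL : LL n = 2*(n*n) := rfl
  exact (conn_bkb hd r n c K hk x hx).tail
    (relIO hd r n c K (lab_bkbI n K hk hx) (lab_bkbO n K hk hx1 hx) (by omega))

lemma conn_pad {k x u : ℕ} (hk : k < n) (hu : u % 2 = 1) (huk : (u+1)/2 = k)
    (hx1 : 1 ≤ x) (hx : x ≤ LL n) :
    (RT k) (anch hd n k) (cI hd n x 0 u) := by
  have hNN : NN n = 2*(n*n)+2*n+2 := rfl
  have hLL : LL n = 2*(n*n) := rfl
  have h2k : u + 1 = 2*k := by omega
  have step := relUO hd r n c K (lab_padI n K hk hu huk hx1 hx)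
    (by rw [h2k]; exact lab_bkbO n K hk hx1 hx) (by omega)
  rw [h2k] at step
  exact (conn_bkbO hd r n c K hk hx1 hx).tail (rel_symm hd r n c K step)

section Jumper

variable {x : ℕ} (hj : jOK n K x) (hx : x % 2 = 0)

include hj hx

lemma jfacts : qN n x < n ∧ pN n x < n ∧ x ≤ LL n ∧ 1 ≤ x ∧ Mx n x ≤ 2*n ∧
    2 * qN n x ≤ Mx n x ∧ 2 * pN n x ≤ Mx n x := by
  have h1 := qN_lt n K hj
  have h2 := pN_lt n K hj
  have h3 := jOK_even_le n K hj hx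
  have h4 := hj.1
  have h5 := qMx n x
  have h6 := pMx n x
  refine ⟨h1, h2, h3, h4, by unfold Mx at *; omega, h5, h6⟩

lemma conn_J1 : (RT (qN n x)) (anch hd n (qN n x)) (cI hd n x 1 (2 * qN n x)) := by
  obtain ⟨h1, h2, h3, h4, h5, h6, h7⟩ := jfacts n K hj hx
  have hNN : NN n = 2*(n*n)+2*n+2 := rfl
  have hLL : LL n = 2*(n*n) := rfl
  refine ((conn_bkb hd r n c K h1 x h3).tail
    (relYO hd r n c K (lab_bkbI n K h1 h3) (lab_j1O n K hj hx (Or.inr rfl)) (by omega))).tail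
    (rel_symm hd r n c K (relIO hd r n c K (lab_j1I n K hj hx h6)
      (lab_j1O n K hj hx (Or.inr rfl)) (by omega)))

lemma conn_J2top : (RT (qN n x)) (anch hd n (qN n x)) (cI hd n x 2 (2 * qN n x)) := by
  obtain ⟨h1, h2, h3, h4, h5, h6, h7⟩ := jfacts n K hj hx
  have hNN : NN n = 2*(n*n)+2*n+2 := rfl
  have hLL : LL n = 2*(n*n) := rfl
  refine ((conn_J1 hd r n c K hj hx).tail
    (relYO hd r n c K (lab_j1I n K hj hx h6) (lab_j2O n K hj hx h6) (by omega))).tail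
    (rel_symm hd r n c K (relIO hd r n c K (lab_j2I n K hj h6)
      (lab_j2O n K hj hx h6) (by omega)))

lemma conn_J2z : ∀ v, v ≤ Mx n x →
    (RT (qN n x)) (cI hd n x 2 v) (cI hd n x 2 0) := by
  obtain ⟨h1, h2, h3, h4, h5, h6, h7⟩ := jfacts n K hj hx
  have hNN : NN n = 2*(n*n)+2*n+2 := rfl
  have hLL : LL n = 2*(n*n) := rfl
  intro v
  induction v with
  | zero => intro _; exact .refl
  | succ v ih =>
    intro hv
    refine Relation.ReflTransGen.trans (Relation.ReflTransGen.tail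
      (Relation.ReflTransGen.single
        (relIO hd r n c K (lab_j2I n K hj hv) (lab_j2O n K hj hx hv) (by omega)))
      (rel_symm hd r n c K
        (relUO hd r n c K (lab_j2I n K hj (by omega)) (lab_j2O n K hj hx hv) (by omega))))
      (ih (by omega))

lemma conn_J2 {v : ℕ} (hv : v ≤ Mx n x) :
    (RT (qN n x)) (anch hd n (qN n x)) (cI hd n x 2 v) := by
  obtain ⟨h1, h2, h3, h4, h5, h6, h7⟩ := jfacts n K hj hx
  exact ((conn_J2top hd r n c K hj hx).trans
    (conn_J2z hd r n c K hj hx _ h6)).trans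
    (rt_symm hd r n c K (conn_J2z hd r n c K hj hx v hv))

lemma conn_J3 {v : ℕ} (hv : v ≤ Mx n x) :
    (RT (qN n x)) (anch hd n (qN n x)) (cI hd n x 1 v) := by
  obtain ⟨h1, h2, h3, h4, h5, h6, h7⟩ := jfacts n K hj hx
  have hNN : NN n = 2*(n*n)+2*n+2 := rfl
  have hLL : LL n = 2*(n*n) := rfl
  refine ((conn_J2 hd r n c K hj hx hv).tail
    (relIO hd r n c K (lab_j2I n K hj hv) (lab_j2O n K hj hx hv) (by omega))).tail
    (rel_symm hd r n c K
      (relYO hd r n c K (lab_j1I n K hj hx hv) (lab_j2O n K hj hx hv) (by omega)))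

lemma conn_J4O {v : ℕ} (hv : v ≤ Mx n x) :
    (RT (qN n x)) (anch hd n (qN n x)) (cO hd n x 2 v) := by
  obtain ⟨h1, h2, h3, h4, h5, h6, h7⟩ := jfacts n K hj hx
  have hNN : NN n = 2*(n*n)+2*n+2 := rfl
  have hLL : LL n = 2*(n*n) := rfl
  exact (conn_J2 hd r n c K hj hx hv).tail
    (relIO hd r n c K (lab_j2I n K hj hv) (lab_j2O n K hj hx hv) (by omega))

lemma conn_J5O {v : ℕ} (hv : v = 2 * pN n x ∨ v = 2 * qN n x) :
    (RT (qN n x)) (anch hd n (qN n x)) (cO hd n x 1 v) := by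
  obtain ⟨h1, h2, h3, h4, h5, h6, h7⟩ := jfacts n K hj hx
  have hNN : NN n = 2*(n*n)+2*n+2 := rfl
  have hLL : LL n = 2*(n*n) := rfl
  have hv' : v ≤ Mx n x := by rcases hv with h | h <;> omega
  exact (conn_J3 hd r n c K hj hx hv').tail
    (relIO hd r n c K (lab_j1I n K hj hx hv') (lab_j1O n K hj hx hv) (by omega))

end Jumper

section JumperOdd

variable {x : ℕ} (hj : jOK n K x) (hx : x % 2 = 1)

include hj hx

lemma conn_J6 {v : ℕ} (hv : v = 2 * pN n x ∨ v = 2 * qN n x) :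
    (RT (qN n x)) (anch hd n (qN n x)) (cI hd n x 1 v) := by
  have hj' : jOK n K (x+1) := jOK_succ n K hx hj
  have hx' : (x+1) % 2 = 0 := by omega
  obtain ⟨h1, h2, h3, h4, h5, h6, h7⟩ := jfacts n K hj' hx'
  have hNN : NN n = 2*(n*n)+2*n+2 := rfl
  have hLL : LL n = 2*(n*n) := rfl
  have hq := qN_succ n hx
  have hp := pN_succ n hx
  have hv' : v = 2 * pN n (x+1) ∨ v = 2 * qN n (x+1) := by
    rcases hv with h | h
    · left; omega
    · right; omega
  have step := relXO hd r n c K (k := qN n x)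
    (lab_j1I' n K hj hx hv) (by rw [← hq]; exact lab_j1O n K hj' hx' hv') (by omega)
  have base := conn_J5O hd r n c K hj' hx' hv'
  rw [hq] at base
  exact base.tail (rel_symm hd r n c K step)

lemma conn_J7 {v : ℕ} (hv : v ≤ Mx n x) :
    (RT (qN n x)) (anch hd n (qN n x)) (cI hd n x 2 v) := by
  have hj' : jOK n K (x+1) := jOK_succ n K hx hj
  have hx' : (x+1) % 2 = 0 := by omega
  obtain ⟨h1, h2, h3, h4, h5, h6, h7⟩ := jfacts n K hj' hx'
  have hNN : NN n = 2*(n*n)+2*n+2 := rfl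
  have hLL : LL n = 2*(n*n) := rfl
  have hq := qN_succ n hx
  have hM := Mx_succ n hx
  have hv' : v ≤ Mx n (x+1) := by omega
  have step := relXO hd r n c K (k := qN n x)
    (lab_j2I n K hj hv) (by rw [← hq]; exact lab_j2O n K hj' hx' hv') (by omega)
  have base := conn_J4O hd r n c K hj' hx' hv'
  rw [hq] at base
  exact base.tail (rel_symm hd r n c K step)

end JumperOdd

end Paths

section Anchor

variable {d : ℕ} (hd : 4 ≤ d) (r n : ℕ) (c : ℕ → ℤ) (K : ℕ → ℕ → Prop)

local notation "RT" k => Relation.ReflTransGen (rel hd r n c K (c k))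

lemma conn_anchor_I {x y u k : ℕ} (hlab : innerLab n K x y u = some k) :
    (RT k) (anch hd n k) (cI hd n x y u) := by
  unfold innerLab at hlab
  by_cases hy0 : y = 0
  · rw [if_pos hy0] at hlab
    by_cases hu2 : u % 2 = 0
    · rw [if_pos hu2] at hlab
      by_cases hc : u / 2 < n ∧ x ≤ LL n
      · rw [if_pos hc] at hlab
        injection hlab with hlab
        rw [hy0, show u = 2*k by omega]
        exact conn_bkb hd r n c K (by omega) x hc.2
      · rw [if_neg hc] at hlab; exact absurd hlab (by simp)
    · rw [if_neg hu2] at hlab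
      by_cases hc : (u+1)/2 < n ∧ 1 ≤ x ∧ x ≤ LL n
      · rw [if_pos hc] at hlab
        injection hlab with hlab
        rw [hy0]
        exact conn_pad hd r n c K (by omega) (by omega) hlab hc.2.1 hc.2.2
      · rw [if_neg hc] at hlab; exact absurd hlab (by simp)
  · rw [if_neg hy0] at hlab
    by_cases hy1 : y = 1
    · rw [if_pos hy1] at hlab
      by_cases hc : jOK n K x ∧ ((x % 2 = 0 ∧ u ≤ Mx n x) ∨
          (x % 2 = 1 ∧ (u = 2 * pN n x ∨ u = 2 * qN n x)))
      · rw [if_pos hc] at hlab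
        injection hlab with hlab
        rw [hy1, ← hlab]
        rcases hc.2 with ⟨hp, hv⟩ | ⟨hp, hv⟩
        · exact conn_J3 hd r n c K hc.1 hp hv
        · exact conn_J6 hd r n c K hc.1 hp hv
      · rw [if_neg hc] at hlab; exact absurd hlab (by simp)
    · rw [if_neg hy1] at hlab
      by_cases hy2 : y = 2
      · rw [if_pos hy2] at hlab
        by_cases hc : jOK n K x ∧ u ≤ Mx n x
        · rw [if_pos hc] at hlab
          injection hlab with hlab
          rw [hy2, ← hlab]
          rcases Nat.mod_two_eq_zero_or_one x with hp | hp
          · exact conn_J2 hd r n c K hc.1 hp hc.2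
          · exact conn_J7 hd r n c K hc.1 hp hc.2
        · rw [if_neg hc] at hlab; exact absurd hlab (by simp)
      · rw [if_neg hy2] at hlab; exact absurd hlab (by simp)

lemma conn_anchor_O {x y u k : ℕ} (hlab : outerLab n K x y u = some k) :
    (RT k) (anch hd n k) (cO hd n x y u) := by
  unfold outerLab at hlab
  by_cases hy0 : y = 0
  · rw [if_pos hy0] at hlab
    by_cases hc : u % 2 = 0 ∧ 1 ≤ x ∧ u / 2 < n ∧ x ≤ LL n
    · rw [if_pos hc] at hlab
      injection hlab with hlab
      rw [hy0, show u = 2*k by omega]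
      exact conn_bkbO hd r n c K (by omega) hc.2.1 hc.2.2.2
    · rw [if_neg hc] at hlab; exact absurd hlab (by simp)
  · rw [if_neg hy0] at hlab
    by_cases hy1 : y = 1
    · rw [if_pos hy1] at hlab
      by_cases hc : jOK n K x ∧ x % 2 = 0 ∧ (u = 2 * pN n x ∨ u = 2 * qN n x)
      · rw [if_pos hc] at hlab
        injection hlab with hlab
        rw [hy1, ← hlab]
        exact conn_J5O hd r n c K hc.1 hc.2.1 hc.2.2
      · rw [if_neg hc] at hlab; exact absurd hlab (by simp)
    · rw [if_neg hy1] at hlab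
      by_cases hy2 : y = 2
      · rw [if_pos hy2] at hlab
        by_cases hc : jOK n K x ∧ x % 2 = 0 ∧ u ≤ Mx n x
        · rw [if_pos hc] at hlab
          injection hlab with hlab
          rw [hy2, ← hlab]
          exact conn_J4O hd r n c K hc.1 hc.2.1 hc.2.2
        · rw [if_neg hc] at hlab; exact absurd hlab (by simp)
      · rw [if_neg hy2] at hlab; exact absurd hlab (by simp)

lemma conn_anchor {k : ℕ} {b : Fin d → ℕ} (hb : b ∈ Rg hd n K k) :
    (RT k) (anch hd n k) b := by
  obtain ⟨hg, hcase⟩ := hb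
  rcases hcase with ⟨hs, hlab⟩ | ⟨hs, hlab⟩
  · have e : cI hd n (b (f0 hd)) (b (f1 hd)) (b (f2 hd)) = b := by
      have hz : b (f3 hd) = NN n - (b (f0 hd) + b (f1 hd) + b (f2 hd)) := by
        unfold sum4 at hs; omega
      conv_rhs => rw [eq_mkc hd hg, hz]
      rfl
    rw [← e]
    exact conn_anchor_I hd r n c K hlab
  · have e : cO hd n (b (f0 hd)) (b (f1 hd)) (b (f2 hd)) = b := by
      have hz : b (f3 hd) = NN n + 1 - (b (f0 hd) + b (f1 hd) + b (f2 hd)) := by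
        unfold sum4 at hs; omega
      conv_rhs => rw [eq_mkc hd hg, hz]
      rfl
    rw [← e]
    exact conn_anchor_O hd r n c K hlab

lemma mem_anch {k : ℕ} (hk : k < n) : anch hd n k ∈ Rg hd n K k := by
  have hNN : NN n = 2*(n*n)+2*n+2 := rfl
  refine ⟨mkc_good hd, Or.inl ⟨?_, ?_⟩⟩
  · unfold anch cI
    rw [sum4_mkc]
    omega
  · unfold anch cI
    rw [mkc_f0, mkc_f1, mkc_f2]
    exact lab_bkbI n K hk (Nat.zero_le _)

lemma Rg_unique {a : Fin d → ℕ} {k k' : ℕ} (h1 : a ∈ Rg hd n K k) (h2 : a ∈ Rg hd n K k') :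
    k = k' := by
  rcases h1.2 with ⟨hs1, hl1⟩ | ⟨hs1, hl1⟩ <;> rcases h2.2 with ⟨hs2, hl2⟩ | ⟨hs2, hl2⟩
  · rw [hl1] at hl2; injection hl2
  · omega
  · omega
  · rw [hl1] at hl2; injection hl2

variable (hc0 : ∀ k, k < n → 1 ≤ c k) (hc1 : ∀ k, k < n → c k ≤ (r : ℤ) - 1)
  (hKv : ∀ p q, K p q → c q < c p)

include hc0 hc1 hKv in
lemma comp_eq {k : ℕ} {a0 : Fin d → ℕ} (h : a0 ∈ Rg hd n K k) :
    CompOf (chi hd r n c K) a0 = Rg hd n K k := by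
  apply Set.Subset.antisymm (comp_sub hd r n c K hKv hc0 hc1 h)
  intro b hb
  have hv : chi hd r n c K a0 = c k := chi_Rg hd r n c K h
  have main : (RT k) a0 b :=
    (rt_symm hd r n c K (conn_anchor hd r n c K h)).trans (conn_anchor hd r n c K hb)
  simp only [CompOf, Set.mem_setOf_eq, hv]
  exact main

end Anchor

section PIchi

variable {d : ℕ} (hd : 4 ≤ d) (r n : ℕ) (c : ℕ → ℤ) (K : ℕ → ℕ → Prop)
  (hc0 : ∀ k, k < n → 1 ≤ c k) (hc1 : ∀ k, k < n → c k ≤ (r : ℤ) - 1)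
  (hKv : ∀ p q, K p q → c q < c p)

include hc0 hc1 hKv in
lemma Rg_mem_Pchi {k : ℕ} (hk : k < n) : Rg hd n K k ∈ Pchi r (chi hd r n c K) := by
  refine ⟨anch hd n k, ?_, ?_, ?_⟩
  · rw [chi_Rg hd r n c K (mem_anch hd n K hk)]
    exact hc0 k hk
  · rw [chi_Rg hd r n c K (mem_anch hd n K hk)]
    exact hc1 k hk
  · exact (comp_eq hd r n c K hc0 hc1 hKv (mem_anch hd n K hk)).symm

include hc0 hc1 hKv in
lemma Pchi_sub {p : Set (Fin d → ℕ)} (hp : p ∈ Pchi r (chi hd r n c K)) :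
    ∃ k, k < n ∧ p = Rg hd n K k := by
  obtain ⟨a, h1, h2, h3⟩ := hp
  have hr : 1 ≤ r := by omega
  obtain ⟨k, hmem, hck⟩ := labeled_of_chi hd r n c K hr rfl h1 h2
  exact ⟨k, Rg_lt hd n K hmem, h3.trans (comp_eq hd r n c K hc0 hc1 hKv hmem)⟩

/-- pointwise inequality for the contact pair. -/
lemma le_YO {x y u : ℕ} (h : x + (y+1) + u ≤ NN n) :
    cI hd n x y u ≤ cO hd n x (y+1) u := by
  intro i
  unfold cI cO mkc
  dsimp only
  split_ifs <;> omega

variable (hKlt : ∀ p q, K p q → p < n ∧ q < n)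

include hKv hKlt in
lemma ichi_of_K {j k : ℕ} (hjk : K j k) :
    Ichi (chi hd r n c K) (Rg hd n K j) (Rg hd n K k) := by
  obtain ⟨hjn, hkn⟩ := hKlt _ _ hjk
  have hNN : NN n = 2*(n*n)+2*n+2 := rfl
  have hLL : LL n = 2*(n*n) := rfl
  set e := j * n + k with he
  set x0 := 2 * e + 2 with hx0
  have hn : 0 < n := by omega
  have heO : eO x0 = e := by unfold eO; omega
  have hen : e < n * n := by
    have h1 : j + 1 ≤ n := hjn
    have h2 : (j+1) * n ≤ n * n := Nat.mul_le_mul_right n h1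
    have h3 : (j+1) * n = j * n + n := by ring
    omega
  have hpN : pN n x0 = j := by
    unfold pN
    rw [heO, he, Nat.add_comm, Nat.add_mul_div_right _ _ hn, Nat.div_eq_of_lt hkn]
    omega
  have hqN : qN n x0 = k := by
    unfold qN
    rw [heO, he, Nat.add_comm, Nat.add_mul_mod_self_right, Nat.mod_eq_of_lt hkn]
  have hjok : jOK n K x0 := by
    refine ⟨by omega, by rw [heO]; exact hen, ?_⟩
    rw [hpN, hqN]; exact hjk
  have hxev : x0 % 2 = 0 := by omega
  have hxL : x0 ≤ LL n := by omega
  have hsb : x0 + (0 + 1) + 2 * j ≤ NN n := by omega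
  have ha : cI hd n x0 0 (2*j) ∈ Rg hd n K j := by
    refine ⟨mkc_good hd, Or.inl ⟨?_, ?_⟩⟩
    · unfold cI; rw [sum4_mkc]; omega
    · unfold cI; rw [mkc_f0, mkc_f1, mkc_f2]
      exact lab_bkbI n K hjn hxL
  have hb : cO hd n x0 1 (2*j) ∈ Rg hd n K k := by
    refine ⟨mkc_good hd, Or.inr ⟨?_, ?_⟩⟩
    · unfold cO; rw [sum4_mkc]; omega
    · unfold cO; rw [mkc_f0, mkc_f1, mkc_f2]
      rw [show (2*j : ℕ) = 2 * pN n x0 by rw [hpN]]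
      rw [← hqN]
      exact lab_j1O n K hjok hxev (Or.inl rfl)
  refine ⟨_, ha, _, hb, ?_, ?_, ?_⟩
  · exact adjYO hd n hsb
  · exact le_YO hd n hsb
  · rw [chi_Rg hd r n c K ha, chi_Rg hd r n c K hb]
    exact hKv _ _ hjk

include hKv in
lemma ichi_to_K {j k : ℕ} (h : Ichi (chi hd r n c K) (Rg hd n K j) (Rg hd n K k)) :
    K j k := by
  obtain ⟨a, ha, b, hb, hadj, hle, hlt⟩ := h
  rw [chi_Rg hd r n c K ha, chi_Rg hd r n c K hb] at hlt
  rcases adj_sum_or hd ha.1 hb.1 hadj with hs | hs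
  · -- a inner, b outer
    have halab : innerLab n K (a (f0 hd)) (a (f1 hd)) (a (f2 hd)) = some j := by
      rcases ha.2 with ⟨-, h3⟩ | ⟨h2, -⟩
      · exact h3
      · rcases hb.2 with ⟨h4, -⟩ | ⟨h4, -⟩ <;> omega
    have hblab : outerLab n K (b (f0 hd)) (b (f1 hd)) (b (f2 hd)) = some k := by
      rcases hb.2 with ⟨h4, -⟩ | ⟨-, h3⟩
      · rcases ha.2 with ⟨h2, -⟩ | ⟨h2, -⟩ <;> omega
      · exact h3
    obtain ⟨k', hk', hck⟩ := adj_cover hd n K ha.1 hb.1 hadj hs hblab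
    rw [halab] at hk'
    injection hk' with hk'
    subst hk'
    rcases hck with rfl | h
    · omega
    · exact h
  · -- a outer, b inner: impossible by values
    have hblab : innerLab n K (b (f0 hd)) (b (f1 hd)) (b (f2 hd)) = some k := by
      rcases hb.2 with ⟨-, h3⟩ | ⟨h2, -⟩
      · exact h3
      · rcases ha.2 with ⟨h4, -⟩ | ⟨h4, -⟩ <;> omega
    have halab : outerLab n K (a (f0 hd)) (a (f1 hd)) (a (f2 hd)) = some j := by
      rcases ha.2 with ⟨h4, -⟩ | ⟨-, h3⟩
      · rcases hb.2 with ⟨h2, -⟩ | ⟨h2, -⟩ <;> omega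
      · exact h3
    obtain ⟨k', hk', hck⟩ := adj_cover hd n K hb.1 ha.1 (gridadj_symm hadj) hs halab
    rw [hblab] at hk'
    injection hk' with hk'
    subst hk'
    rcases hck with rfl | h
    · omega
    · have := hKv _ _ h; omega

end PIchi

lemma transgen_iff {α β : Type*} (e : α ≃ β) (ra : α → α → Prop) (rb : β → β → Prop)
    (h : ∀ u v, ra u v ↔ rb (e u) (e v)) {p q : α} :
    Relation.TransGen ra p q ↔ Relation.TransGen rb (e p) (e q) := by
  constructor
  · intro ht
    induction ht with
    | single h1 => exact .single ((h _ _).1 h1)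
    | tail _ h2 ih => exact .tail ih ((h _ _).1 h2)
  · intro ht
    have key : ∀ bq, Relation.TransGen rb (e p) bq → Relation.TransGen ra p (e.symm bq) := by
      intro bq ht
      induction ht with
      | single h1 =>
        refine .single ((h _ _).2 ?_)
        simpa using h1
      | tail _ h2 ih =>
        refine .tail ih ((h _ _).2 ?_)
        simpa using h2
    have h2 := key _ ht
    simpa using h2

section Final

variable (r : ℕ) {d : ℕ} (S : IncStruct (r - 1))

noncomputable def nS : ℕ := Nat.card S.P

noncomputable def iS : S.P ≃ Fin (nS r S) := by
  haveI := S.finP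
  exact Finite.equivFin S.P

noncomputable def cS : ℕ → ℤ := fun k =>
  if h : k < nS r S then (r : ℤ) - S.deg ((iS r S).symm ⟨k, h⟩) else 0

def KS : ℕ → ℕ → Prop := fun p q =>
  ∃ (hp : p < nS r S) (hq : q < nS r S),
    S.I ((iS r S).symm ⟨p, hp⟩) ((iS r S).symm ⟨q, hq⟩)

variable (hr : 1 ≤ r)

include hr in
lemma hc0S : ∀ k, k < nS r S → 1 ≤ cS r S k := by
  intro k hk
  unfold cS
  rw [dif_pos hk]
  have h1 := S.deg_le ((iS r S).symm ⟨k, hk⟩)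
  have h2 := S.deg_pos ((iS r S).symm ⟨k, hk⟩)
  omega

lemma hc1S : ∀ k, k < nS r S → cS r S k ≤ (r : ℤ) - 1 := by
  intro k hk
  unfold cS
  rw [dif_pos hk]
  have h2 := S.deg_pos ((iS r S).symm ⟨k, hk⟩)
  omega

lemma hKvS : ∀ p q, KS r S p q → cS r S q < cS r S p := by
  rintro p q ⟨hp, hq, hI⟩
  have := S.I_lt _ _ hI
  unfold cS
  rw [dif_pos hp, dif_pos hq]
  omega

lemma hKltS : ∀ p q, KS r S p q → p < nS r S ∧ q < nS r S := by
  rintro p q ⟨hp, hq, -⟩; exact ⟨hp, hq⟩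

end Final

end S13

/-- Let `r ≥ 1` and `d ≥ 4`.  Every rank `r−1` incidence structure `S` is
equivalent to `S_χ` for some characteristic function `χ : ℕ^d → ℤ` with parameters `r, d`. -/
theorem statement13 {r d : ℕ} (hr : 1 ≤ r) (hd : 4 ≤ d) (S : IncStruct (r - 1)) :
    ∃ χ : (Fin d → ℕ) → ℤ, IsCharFun r d χ ∧ EquivToSchi r χ S := by
  classical
  have hc0 := S13.hc0S r S hr
  have hc1 := S13.hc1S r S
  have hKv := S13.hKvS r S
  have hKlt := S13.hKltS r S
  refine ⟨S13.chi hd r (S13.nS r S) (S13.cS r S) (S13.KS r S),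
    S13.chi_ischar hd r (S13.nS r S) (S13.cS r S) (S13.KS r S) hc0 hc1 hKv hr, ?_⟩
  have memF : ∀ g : S.P,
      S13.Rg hd (S13.nS r S) (S13.KS r S) ((S13.iS r S g : Fin (S13.nS r S)) : ℕ) ∈
        Pchi r (S13.chi hd r (S13.nS r S) (S13.cS r S) (S13.KS r S)) :=
    fun g => S13.Rg_mem_Pchi hd r (S13.nS r S) (S13.cS r S) (S13.KS r S) hc0 hc1 hKv
      (S13.iS r S g).isLt
  set F : S.P → {p : Set (Fin d → ℕ) //
      p ∈ Pchi r (S13.chi hd r (S13.nS r S) (S13.cS r S) (S13.KS r S))} :=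
    fun g => ⟨S13.Rg hd (S13.nS r S) (S13.KS r S) ((S13.iS r S g : Fin (S13.nS r S)) : ℕ),
      memF g⟩ with hF
  have hFinj : Function.Injective F := by
    intro g g' h
    have h2 := congrArg Subtype.val h
    simp only [hF] at h2
    have h3 := S13.mem_anch hd (S13.nS r S) (S13.KS r S) (d := d) (S13.iS r S g).isLt
    rw [h2] at h3
    have h4 := S13.Rg_unique hd (S13.nS r S) (S13.KS r S)
      (S13.mem_anch hd (S13.nS r S) (S13.KS r S) (d := d) (S13.iS r S g).isLt) h3
    exact (S13.iS r S).injective (Fin.ext h4)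
  have hFsurj : Function.Surjective F := by
    rintro ⟨p, hp⟩
    obtain ⟨k, hk, rfl⟩ := S13.Pchi_sub hd r (S13.nS r S) (S13.cS r S) (S13.KS r S)
      hc0 hc1 hKv hp
    refine ⟨(S13.iS r S).symm ⟨k, hk⟩, Subtype.ext ?_⟩
    show S13.Rg hd (S13.nS r S) (S13.KS r S)
      ((S13.iS r S ((S13.iS r S).symm ⟨k, hk⟩) : Fin (S13.nS r S)) : ℕ) =
        S13.Rg hd (S13.nS r S) (S13.KS r S) k
    rw [Equiv.apply_symm_apply]
  set e := (Equiv.ofBijective F ⟨hFinj, hFsurj⟩).symm with he_def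
  have hFe : ∀ pq, F (e pq) = pq :=
    fun pq => (Equiv.ofBijective F ⟨hFinj, hFsurj⟩).apply_symm_apply pq
  have hmem1 : ∀ pq : {p : Set (Fin d → ℕ) //
      p ∈ Pchi r (S13.chi hd r (S13.nS r S) (S13.cS r S) (S13.KS r S))},
      pq.1 = S13.Rg hd (S13.nS r S) (S13.KS r S)
        ((S13.iS r S (e pq) : Fin (S13.nS r S)) : ℕ) := by
    intro pq
    conv_lhs => rw [← hFe pq]
  refine ⟨e, ?_, ?_⟩
  · intro p a hap
    rw [hmem1 p] at hap
    rw [S13.chi_Rg hd r (S13.nS r S) (S13.cS r S) (S13.KS r S) hap]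
    show (S.deg (e p) : ℤ) = (r : ℤ) - S13.cS r S ((S13.iS r S (e p) : Fin (S13.nS r S)) : ℕ)
    unfold S13.cS
    split_ifs with hcase
    · simp only [Fin.eta, Equiv.symm_apply_apply]
      ring
    · exact absurd (S13.iS r S (e p)).isLt hcase
  · intro p q
    apply S13.transgen_iff e _ S.I
    intro u v
    constructor
    · intro h
      rw [hmem1 u, hmem1 v] at h
      have hKuv := S13.ichi_to_K hd r (S13.nS r S) (S13.cS r S) (S13.KS r S) hKv h
      obtain ⟨hp, hq, hI⟩ := hKuv
      simp only [Fin.eta, Equiv.symm_apply_apply] at hI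
      exact hI
    · intro h
      rw [hmem1 u, hmem1 v]
      apply S13.ichi_of_K hd r (S13.nS r S) (S13.cS r S) (S13.KS r S) hKv hKlt
      refine ⟨(S13.iS r S (e u)).isLt, (S13.iS r S (e v)).isLt, ?_⟩
      simp only [Fin.eta, Equiv.symm_apply_apply]
      exact h
end

section
/- Let m ≥ 1 be an integer, δ > 0 a real number, and K ⊆ ℝ^m a nonempty connected set. Define A := {a ∈ ℤ^m : (∏_{i=1}^m [δaᵢ, δ(aᵢ+1)]) ∩ K ≠ ∅}. Then A is connected under grid adjacency: for any a, b ∈ A there is a finite sequence a = a₀, a₁, …, a_k = b of elements of A such that for each j, a_j and a_{j+1} differ in exactly one coordinate, and there by exactly 1. -/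
/-- Two elements of `ℤ^m` are (grid) adjacent: they agree in all but one coordinate, where
they differ by exactly `1`. -/
def GridAdjZ {m : ℕ} (a b : Fin m → ℤ) : Prop :=
  ∃ j : Fin m, (∀ i : Fin m, i ≠ j → a i = b i) ∧ (a j = b j + 1 ∨ b j = a j + 1)

/-- The closed grid cell of index `a ∈ ℤ^m` at scale `δ`:
`∏_{i=1}^m [δaᵢ, δ(aᵢ+1)] ⊆ ℝ^m` meets the set `K`. -/
def CellMeets {m : ℕ} (δ : ℝ) (K : Set (EuclideanSpace ℝ (Fin m))) (a : Fin m → ℤ) : Prop :=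
  ∃ x ∈ K, ∀ i : Fin m, x i ∈ Set.Icc (δ * (a i : ℝ)) (δ * ((a i : ℝ) + 1))

/-
Cover `ℝ^m` by the closed grid cells, a locally finite family. Call two cells linked if they share a
point of `K`. The union of the cells reachable from `a` by links and the union of all other cells
are then closed, cover `K`, and cannot meet inside `K`; as `K` is connected, every cell meeting
`K` is reachable. Finally, two cells sharing a point `x` have indices differing by at most one in
each coordinate, so changing one coordinate at a time gives a path of adjacent cells through `x`.
-/

open Set Relation

theorem IsPreconnected.reflTransGen_of_locallyFinite {X ι : Type*} [TopologicalSpace X]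
    {K : Set X} (hK : IsPreconnected K) {F : ι → Set X} (hF : LocallyFinite F)
    (hclosed : ∀ i, IsClosed (F i)) (hcover : K ⊆ ⋃ i, F i) {i j : ι}
    (hi : (K ∩ F i).Nonempty) (hj : (K ∩ F j).Nonempty) :
    ReflTransGen (fun k l => (K ∩ F k ∩ F l).Nonempty) i j := by
  set r := fun k l => (K ∩ F k ∩ F l).Nonempty
  have isClosed_iUnion (P : ι → Prop) : IsClosed (⋃ k : {k // P k}, F k) :=
    (hF.comp_injective Subtype.val_injective).isClosed_iUnion fun k => hclosed k
  have hsplit : K ∩ ((⋃ k : {k // ReflTransGen r i k}, F k) ∩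
      ⋃ k : {k // ¬ ReflTransGen r i k}, F k) = ∅ := by
    refine eq_empty_of_forall_notMem ?_
    simp only [mem_inter_iff, mem_iUnion, Subtype.exists, exists_prop]
    rintro x ⟨hxK, ⟨k, hik, hxk⟩, ⟨l, hil, hxl⟩⟩
    exact hil (hik.tail ⟨x, ⟨hxK, hxk⟩, hxl⟩)
  have hK_sub : K ⊆ ⋃ k : {k // ReflTransGen r i k}, F k := by
    by_contra hK_not
    obtain ⟨y, hyK, hy⟩ := not_subset.1 hK_not
    refine (isPreconnected_closed_iff.1 hK _ _ (isClosed_iUnion _) (isClosed_iUnion _) ?_ ?_ ?_)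
      |>.ne_empty hsplit
    · intro x hx
      obtain ⟨k, hxk⟩ := mem_iUnion.1 (hcover hx)
      by_cases hik : ReflTransGen r i k
      exacts [Or.inl (mem_iUnion.2 ⟨⟨k, hik⟩, hxk⟩), Or.inr (mem_iUnion.2 ⟨⟨k, hik⟩, hxk⟩)]
    · obtain ⟨x, hxK, hxi⟩ := hi
      exact ⟨x, hxK, mem_iUnion.2 ⟨⟨i, ReflTransGen.refl⟩, hxi⟩⟩
    · obtain ⟨k, hyk⟩ := mem_iUnion.1 (hcover hyK)
      exact ⟨y, hyK, mem_iUnion.2 ⟨⟨k, fun hik => hy (mem_iUnion.2 ⟨⟨k, hik⟩, hyk⟩)⟩, hyk⟩⟩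
  obtain ⟨x, hxK, hxj⟩ := hj
  obtain ⟨⟨k, hik⟩, hxk⟩ := mem_iUnion.1 (hK_sub hxK)
  exact hik.tail ⟨x, ⟨hxK, hxk⟩, hxj⟩

def GridCell {m : ℕ} (δ : ℝ) (c : Fin m → ℤ) : Set (EuclideanSpace ℝ (Fin m)) :=
  {x | ∀ i : Fin m, x i ∈ Icc (δ * (c i : ℝ)) (δ * ((c i : ℝ) + 1))}

def CellGraphAdj {m : ℕ} (δ : ℝ) (K : Set (EuclideanSpace ℝ (Fin m))) (u v : Fin m → ℤ) :
    Prop :=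
  CellMeets δ K u ∧ CellMeets δ K v ∧ GridAdjZ u v

section GridCell

variable {m : ℕ} {δ : ℝ}

theorem isClosed_gridCell (δ : ℝ) (c : Fin m → ℤ) : IsClosed (GridCell δ c) := by
  rw [GridCell, ofPred_forall]
  exact isClosed_iInter fun i => isClosed_Icc.preimage (EuclideanSpace.proj i).continuous

theorem mem_gridCell_floor (hδ : 0 < δ) (x : EuclideanSpace ℝ (Fin m)) :
    x ∈ GridCell δ (fun i => ⌊x i / δ⌋) := by
  intro i
  have hfloor := Int.floor_le (x i / δ)
  have hlt := Int.lt_floor_add_one (x i / δ)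
  constructor
  · calc δ * (⌊x i / δ⌋ : ℝ) ≤ δ * (x i / δ) := by gcongr
      _ = x i := mul_div_cancel₀ _ hδ.ne'
  · calc x i = δ * (x i / δ) := (mul_div_cancel₀ _ hδ.ne').symm
      _ ≤ δ * ((⌊x i / δ⌋ : ℝ) + 1) := by gcongr

theorem iUnion_gridCell (hδ : 0 < δ) : ⋃ c : Fin m → ℤ, GridCell δ c = univ :=
  eq_univ_of_forall fun x => mem_iUnion.2 ⟨_, mem_gridCell_floor hδ x⟩

theorem mem_Icc_floor_of_abs_sub_lt (hδ : 0 < δ) {c : ℤ} {y t : ℝ}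
    (hy : y ∈ Icc (δ * c) (δ * (c + 1))) (hyt : |y - t| < δ) :
    c ∈ Icc (⌊t / δ⌋ - 1) (⌊t / δ⌋ + 1) := by
  obtain ⟨hyt₁, hyt₂⟩ := abs_lt.1 hyt
  have hc_lt : (c : ℝ) < t / δ + 1 := by
    rw [← mul_lt_mul_iff_right₀ hδ, mul_add, mul_div_cancel₀ _ hδ.ne']; linarith [hy.1]
  have hlt_c : t / δ < c + 2 := by
    rw [← mul_lt_mul_iff_right₀ hδ, mul_add, mul_div_cancel₀ _ hδ.ne']; linarith [hy.2]
  have hfloor_lt : ⌊t / δ⌋ < c + 2 := Int.floor_lt.2 (by push_cast; linarith)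
  have hle_floor : c - 1 ≤ ⌊t / δ⌋ := Int.le_floor.2 (by push_cast; linarith)
  constructor <;> omega

theorem locallyFinite_gridCell (hδ : 0 < δ) :
    LocallyFinite (fun c : Fin m → ℤ => GridCell δ c) := by
  intro x
  refine ⟨Metric.ball x δ, Metric.ball_mem_nhds x hδ, ?_⟩
  refine (Set.Finite.pi' fun i => finite_Icc (⌊x i / δ⌋ - 1) (⌊x i / δ⌋ + 1)).subset ?_
  rintro c ⟨y, hyc, hyx⟩ i
  refine mem_Icc_floor_of_abs_sub_lt hδ (hyc i) ?_
  rw [← Real.dist_eq]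
  exact (PiLp.dist_apply_le y x i).trans_lt (Metric.mem_ball.1 hyx)

theorem le_add_one_of_mem_gridCell (hδ : 0 < δ) {x : EuclideanSpace ℝ (Fin m)} {u v : Fin m → ℤ}
    (hu : x ∈ GridCell δ u) (hv : x ∈ GridCell δ v) (i : Fin m) : u i ≤ v i + 1 := by
  have h : δ * (u i : ℝ) ≤ δ * ((v i : ℝ) + 1) := (hu i).1.trans (hv i).2
  exact_mod_cast le_of_mul_le_mul_left h hδ

theorem update_mem_gridCell {x : EuclideanSpace ℝ (Fin m)} {u v : Fin m → ℤ}
    (hu : x ∈ GridCell δ u) (hv : x ∈ GridCell δ v) (j : Fin m) :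
    x ∈ GridCell δ (Function.update u j (v j)) := by
  intro i
  rcases eq_or_ne i j with rfl | hij
  · simpa using hv i
  · simpa [Function.update_of_ne hij] using hu i

theorem gridAdjZ_update {u : Fin m → ℤ} {j : Fin m} {t : ℤ} (h : u j = t + 1 ∨ t = u j + 1) :
    GridAdjZ u (Function.update u j t) :=
  ⟨j, fun i hij => (Function.update_of_ne hij _ _).symm, by simpa using h⟩

theorem reflTransGen_cellGraphAdj_update (hδ : 0 < δ) {K : Set (EuclideanSpace ℝ (Fin m))}
    {x : EuclideanSpace ℝ (Fin m)} (hxK : x ∈ K) {u v : Fin m → ℤ}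
    (hu : x ∈ GridCell δ u) (hv : x ∈ GridCell δ v) (j : Fin m) :
    ReflTransGen (CellGraphAdj δ K) u (Function.update u j (v j)) := by
  by_cases huv : u j = v j
  · rw [← huv, Function.update_eq_self]
  · have hvu := le_add_one_of_mem_gridCell hδ hv hu j
    have huv' := le_add_one_of_mem_gridCell hδ hu hv j
    exact .single ⟨⟨x, hxK, hu⟩, ⟨x, hxK, update_mem_gridCell hu hv j⟩,
      gridAdjZ_update (by omega)⟩

theorem reflTransGen_cellGraphAdj_of_mem_gridCell (hδ : 0 < δ)
    {K : Set (EuclideanSpace ℝ (Fin m))} {x : EuclideanSpace ℝ (Fin m)} (hxK : x ∈ K)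
    {u v : Fin m → ℤ} (hu : x ∈ GridCell δ u) (hv : x ∈ GridCell δ v) :
    ReflTransGen (CellGraphAdj δ K) u v := by
  classical
  suffices ∀ s : Finset (Fin m), ∀ u, x ∈ GridCell δ u → (∀ i ∉ s, u i = v i) →
      ReflTransGen (CellGraphAdj δ K) u v from
    this Finset.univ u hu fun i hi => absurd (Finset.mem_univ i) hi
  intro s
  induction s using Finset.induction with
  | empty => exact fun u _ huv => (funext fun i => huv i (Finset.notMem_empty i)) ▸ .refl
  | insert j s _ ih =>
    intro u hu huv
    refine (reflTransGen_cellGraphAdj_update hδ hxK hu hv j).trans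
      (ih _ (update_mem_gridCell hu hv j) fun i hi => ?_)
    rcases eq_or_ne i j with rfl | hij
    · simp
    · simpa [Function.update_of_ne hij] using huv i (by simp [hij, hi])

end GridCell

theorem statement14_general {m : ℕ} (δ : ℝ) (hδ : 0 < δ)
    (K : Set (EuclideanSpace ℝ (Fin m))) (hK : IsConnected K)
    (a b : Fin m → ℤ) (ha : CellMeets δ K a) (hb : CellMeets δ K b) :
    Relation.ReflTransGen
      (fun u v : Fin m → ℤ => CellMeets δ K u ∧ CellMeets δ K v ∧ GridAdjZ u v) a b := by
  have hcells : ReflTransGen (fun u v => (K ∩ GridCell δ u ∩ GridCell δ v).Nonempty) a b :=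
    hK.isPreconnected.reflTransGen_of_locallyFinite (locallyFinite_gridCell hδ)
      (isClosed_gridCell δ) (by simp [iUnion_gridCell hδ]) ha hb
  refine ReflTransGen.lift' (p := CellGraphAdj δ K) id ?_ a b hcells
  rintro u v ⟨x, ⟨hxK, hxu⟩, hxv⟩
  exact reflTransGen_cellGraphAdj_of_mem_gridCell hδ hxK hxu hxv

/-- Let `m ≥ 1`, `δ > 0`, and let `K ⊆ ℝ^m` be a nonempty connected set.
Let `A := {a ∈ ℤ^m : (∏ᵢ [δaᵢ, δ(aᵢ+1)]) ∩ K ≠ ∅}`.  Then `A` is connected under grid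
adjacency: any two of its elements are joined by a finite path of consecutively adjacent
elements of `A`. -/
theorem statement14 {m : ℕ} (hm : 1 ≤ m) (δ : ℝ) (hδ : 0 < δ)
    (K : Set (EuclideanSpace ℝ (Fin m))) (hK : IsConnected K)
    (a b : Fin m → ℤ) (ha : CellMeets δ K a) (hb : CellMeets δ K b) :
    Relation.ReflTransGen
      (fun u v : Fin m → ℤ => CellMeets δ K u ∧ CellMeets δ K v ∧ GridAdjZ u v) a b :=
  statement14_general δ hδ K hK a b ha hb
end

section
/- Let m ≥ 1 be an integer, δ > 0 and M ≥ 0 real numbers, and K, K′ ⊆ ℝ^m nonempty sets whose Euclidean distance satisfies inf{‖x − y‖ : x ∈ K, y ∈ K′} ≥ δ(M + 2√m). Let A := {a ∈ ℤ^m : (∏_{i=1}^m [δaᵢ, δ(aᵢ+1)]) ∩ K ≠ ∅} and A′ := {b ∈ ℤ^m : (∏_{i=1}^m [δbᵢ, δ(bᵢ+1)]) ∩ K′ ≠ ∅}. Then for every a ∈ A and b ∈ A′ one has Σ_{i=1}^m |aᵢ − bᵢ| ≥ M. -/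
/-- Let `m ≥ 1`, `δ > 0`, `M ≥ 0`, and let `K, K′ ⊆ ℝ^m` be nonempty sets
whose Euclidean distance satisfies `inf{‖x − y‖ : x ∈ K, y ∈ K′} ≥ δ(M + 2√m)`.  If the grid
cell of `a` meets `K` and the grid cell of `b` meets `K′`, then the Manhattan distance
satisfies `Σᵢ |aᵢ − bᵢ| ≥ M`. -/
theorem statement15 {m : ℕ} (hm : 1 ≤ m) (δ M : ℝ) (hδ : 0 < δ) (hM : 0 ≤ M)
    (K K' : Set (EuclideanSpace ℝ (Fin m))) (hK : K.Nonempty) (hK' : K'.Nonempty)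
    (hdist : ∀ x ∈ K, ∀ y ∈ K', δ * (M + 2 * Real.sqrt m) ≤ dist x y)
    (a b : Fin m → ℤ) (ha : CellMeets δ K a) (hb : CellMeets δ K' b) :
    M ≤ ∑ i : Fin m, |(a i : ℝ) - (b i : ℝ)| := by
  obtain ⟨x, hxK, hxa⟩ := ha
  obtain ⟨y, hyK', hyb⟩ := hb
  set p : EuclideanSpace ℝ (Fin m) := WithLp.toLp 2 (fun i => δ * (a i : ℝ)) with hp
  set q : EuclideanSpace ℝ (Fin m) := WithLp.toLp 2 (fun i => δ * (b i : ℝ)) with hq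
  set S : ℝ := ∑ i : Fin m, |(a i : ℝ) - (b i : ℝ)| with hS
  have hS0 : 0 ≤ S := Finset.sum_nonneg fun i _ => abs_nonneg _
  have hsm : (0:ℝ) ≤ Real.sqrt m := Real.sqrt_nonneg _
  have cellbound : ∀ (z : EuclideanSpace ℝ (Fin m)) (c : Fin m → ℤ),
      (∀ i, z i ∈ Set.Icc (δ * (c i : ℝ)) (δ * ((c i : ℝ) + 1))) →
      dist z (WithLp.toLp 2 (fun i => δ * (c i : ℝ)) : EuclideanSpace ℝ (Fin m)) ≤ δ * Real.sqrt m := by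
    intro z c hz
    rw [EuclideanSpace.dist_eq]
    have hsum : ∑ i : Fin m, dist (z i) (δ * (c i : ℝ)) ^ 2 ≤ ∑ _i : Fin m, δ ^ 2 := by
      apply Finset.sum_le_sum
      intro i _
      have hi := hz i
      have hd : dist (z i) (δ * (c i : ℝ)) ≤ δ := by
        rw [Real.dist_eq, abs_le]
        constructor <;> nlinarith [hi.1, hi.2]
      nlinarith [dist_nonneg (x := z i) (y := (δ * (c i : ℝ)))]
    calc Real.sqrt (∑ i : Fin m, dist (z i) (δ * (c i : ℝ)) ^ 2)
        ≤ Real.sqrt ((m : ℝ) * δ ^ 2) := by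
          apply Real.sqrt_le_sqrt; simpa using hsum
      _ = δ * Real.sqrt m := by
          rw [Real.sqrt_mul (Nat.cast_nonneg m), Real.sqrt_sq hδ.le]; ring
  have h1 : dist x p ≤ δ * Real.sqrt m := cellbound x a hxa
  have h2 : dist y q ≤ δ * Real.sqrt m := cellbound y b hyb
  have h3 : dist p q ≤ δ * S := by
    rw [EuclideanSpace.dist_eq]
    have key : ∑ i : Fin m, dist (p i) (q i) ^ 2 ≤ (δ * S) ^ 2 := by
      have : ∀ i : Fin m, dist (p i) (q i) = δ * |(a i : ℝ) - (b i : ℝ)| := by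
        intro i
        simp only [hp, hq, PiLp.toLp_apply, Real.dist_eq]
        rw [← mul_sub, abs_mul, abs_of_pos hδ]
      calc ∑ i : Fin m, dist (p i) (q i) ^ 2
          = ∑ i : Fin m, (δ * |(a i : ℝ) - (b i : ℝ)|) ^ 2 := by
            exact Finset.sum_congr rfl fun i _ => by rw [this i]
        _ ≤ (∑ i : Fin m, δ * |(a i : ℝ) - (b i : ℝ)|) ^ 2 :=
            Finset.sum_sq_le_sq_sum_of_nonneg fun i _ => by positivity
        _ = (δ * S) ^ 2 := by rw [← Finset.mul_sum]
    calc Real.sqrt (∑ i : Fin m, dist (p i) (q i) ^ 2)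
        ≤ Real.sqrt ((δ * S) ^ 2) := Real.sqrt_le_sqrt key
      _ = δ * S := Real.sqrt_sq (by positivity)
  have htri : dist x y ≤ δ * Real.sqrt m + δ * S + δ * Real.sqrt m := by
    calc dist x y ≤ dist x p + dist p q + dist q y := dist_triangle4 x p q y
      _ ≤ δ * Real.sqrt m + δ * S + δ * Real.sqrt m := by
          rw [dist_comm q y]; gcongr
  have hd := hdist x hxK y hyK'
  nlinarith [htri, hd]
end
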